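/- arXiv:2304.09355 — 4 statements merged into one kernel-verified Lean document; each statement's English description precedes it below -/
import Mathlib

section
/- Let Y–X–T be a Markov chain on finite alphabets. Then I(T; Y) = I(X; Y) − E_{x∼P(X), t∼P(T|x)}[ D_KL( P(Y|X=x) ‖ P(Y|T=t) ) ]. -/
open scoped BigOperators

section InfoTheory

variable {α β γ δ : Type*} [Fintype α] [Fintype β] [Fintype γ] [Fintype δ]

/-- `p` is a probability mass function on pairs. -/
def IsPMF2 (p : α → β → ℝ) : Prop :=
  (∀ a b, 0 ≤ p a b) ∧ ∑ a, ∑ b, p a b = 1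

/-- `p` is a probability mass function on triples. -/
def IsPMF3 (p : α → β → γ → ℝ) : Prop :=
  (∀ a b c, 0 ≤ p a b c) ∧ ∑ a, ∑ b, ∑ c, p a b c = 1

/-- `p` is a probability mass function on quadruples. -/
def IsPMF4 (p : α → β → γ → δ → ℝ) : Prop :=
  (∀ a b c d, 0 ≤ p a b c d) ∧ ∑ a, ∑ b, ∑ c, ∑ d, p a b c d = 1

/-- Shannon entropy of a pmf. -/
noncomputable def H1 (p : α → ℝ) : ℝ := ∑ a, Real.negMulLog (p a)

/-- First marginal of a joint pmf on pairs. -/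
def m1 (p : α → β → ℝ) (a : α) : ℝ := ∑ b, p a b

/-- Second marginal of a joint pmf on pairs. -/
def m2 (p : α → β → ℝ) (b : β) : ℝ := ∑ a, p a b

/-- Mutual information `I(A;B)` of a joint pmf on pairs. -/
noncomputable def MI (p : α → β → ℝ) : ℝ :=
  ∑ a, ∑ b, p a b * Real.log (p a b / (m1 p a * m2 p b))

/-- Conditional entropy `H(A | B)` of a joint pmf on pairs. -/
noncomputable def condEnt (p : α → β → ℝ) : ℝ :=
  ∑ a, ∑ b, p a b * Real.log (m2 p b / p a b)

/-- Conditional mutual information `I(A;B|C)` of a joint pmf on triples. -/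
noncomputable def CMI (p : α → β → γ → ℝ) : ℝ :=
  ∑ a, ∑ b, ∑ c, p a b c *
    Real.log (((∑ a', ∑ b', p a' b' c) * p a b c) /
      ((∑ b', p a b' c) * (∑ a', p a' b c)))

/-- `Markov p` : the Markov chain A–B–C, i.e. A ⟂ C given B. -/
def Markov (p : α → β → γ → ℝ) : Prop :=
  ∀ a b c, p a b c * (∑ a', ∑ c', p a' b c') = (∑ c', p a b c') * (∑ a', p a' b c)

end InfoTheory

private lemma sum3_comm {ι κ μ : Type*} [Fintype ι] [Fintype κ] [Fintype μ]
    (f : ι → κ → μ → ℝ) :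
    ∑ a, ∑ b, ∑ c, f a b c = ∑ c, ∑ a, ∑ b, f a b c := by
  calc ∑ a, ∑ b, ∑ c, f a b c
      = ∑ a, ∑ c, ∑ b, f a b c :=
        Finset.sum_congr rfl fun a _ => Finset.sum_comm
    _ = ∑ c, ∑ a, ∑ b, f a b c := Finset.sum_comm

/-- For a Markov chain Y–X–T,
I(T;Y) = I(X;Y) − E_{(x,t)}[ D_KL( P(Y|X=x) ‖ P(Y|T=t) ) ]. -/
theorem mi_loss_is_expected_kl
    {Y X T : Type*} [Fintype Y] [Fintype X] [Fintype T]
    (p : Y → X → T → ℝ) (hp : IsPMF3 p)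
    (hchain : Markov p) :
    MI (fun t y => ∑ x, p y x t)
      = MI (fun x y => ∑ t, p y x t)
        - ∑ x, ∑ t, (∑ y, p y x t) *
            (∑ y, ((∑ t', p y x t') / (∑ y', ∑ t', p y' x t')) *
              Real.log (((∑ t', p y x t') / (∑ y', ∑ t', p y' x t'))
                / ((∑ x', p y x' t) / (∑ y', ∑ x', p y' x' t)))) := by

  rw [eq_sub_iff_add_eq]
  simp only [MI, m1, m2]
  obtain ⟨hnn, -⟩ := hp
  have hTY : (∑ t, ∑ y, (∑ x, p y x t) *
        Real.log ((∑ x, p y x t) / ((∑ y', ∑ x', p y' x' t) * ∑ t', ∑ x', p y x' t')))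
      = ∑ x, ∑ t, ∑ y, p y x t *
        Real.log ((∑ x', p y x' t) / ((∑ y', ∑ x', p y' x' t) * ∑ t', ∑ x', p y x' t')) := by
    calc (∑ t, ∑ y, (∑ x, p y x t) *
          Real.log ((∑ x, p y x t) / ((∑ y', ∑ x', p y' x' t) * ∑ t', ∑ x', p y x' t')))
        = ∑ t, ∑ y, ∑ x, p y x t *
          Real.log ((∑ x', p y x' t) / ((∑ y', ∑ x', p y' x' t) * ∑ t', ∑ x', p y x' t')) :=
          Finset.sum_congr rfl fun t _ => Finset.sum_congr rfl fun y _ => Finset.sum_mul _ _ _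
      _ = ∑ x, ∑ t, ∑ y, p y x t *
          Real.log ((∑ x', p y x' t) / ((∑ y', ∑ x', p y' x' t) * ∑ t', ∑ x', p y x' t')) :=
          sum3_comm _
  have hXY : (∑ x, ∑ y, (∑ t, p y x t) *
        Real.log ((∑ t, p y x t) / ((∑ y', ∑ t', p y' x t') * ∑ x', ∑ t', p y x' t')))
      = ∑ x, ∑ t, ∑ y, p y x t *
        Real.log ((∑ t', p y x t') / ((∑ y', ∑ t', p y' x t') * ∑ x', ∑ t', p y x' t')) := by
    refine Finset.sum_congr rfl fun x _ => ?_
    calc (∑ y, (∑ t, p y x t) *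
          Real.log ((∑ t, p y x t) / ((∑ y', ∑ t', p y' x t') * ∑ x', ∑ t', p y x' t')))
        = ∑ y, ∑ t, p y x t *
          Real.log ((∑ t', p y x t') / ((∑ y', ∑ t', p y' x t') * ∑ x', ∑ t', p y x' t')) :=
          Finset.sum_congr rfl fun y _ => Finset.sum_mul _ _ _
      _ = ∑ t, ∑ y, p y x t *
          Real.log ((∑ t', p y x t') / ((∑ y', ∑ t', p y' x t') * ∑ x', ∑ t', p y x' t')) :=
          Finset.sum_comm
  have hKL : (∑ x, ∑ t, (∑ y, p y x t) *
        ∑ y, ((∑ t', p y x t') / ∑ y', ∑ t', p y' x t') *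
          Real.log (((∑ t', p y x t') / ∑ y', ∑ t', p y' x t') /
            ((∑ x', p y x' t) / ∑ y', ∑ x', p y' x' t)))
      = ∑ x, ∑ t, ∑ y, p y x t *
          Real.log (((∑ t', p y x t') / ∑ y', ∑ t', p y' x t') /
            ((∑ x', p y x' t) / ∑ y', ∑ x', p y' x' t)) := by
    refine Finset.sum_congr rfl fun x _ => Finset.sum_congr rfl fun t _ => ?_
    rw [Finset.mul_sum]
    refine Finset.sum_congr rfl fun y _ => ?_
    by_cases hx : (∑ y', ∑ t', p y' x t') = 0
    · have h1 : (∑ t', p y x t') = 0 :=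
        (Finset.sum_eq_zero_iff_of_nonneg fun i _ =>
          Finset.sum_nonneg fun j _ => hnn i x j).mp hx y (Finset.mem_univ y)
      have h2 : p y x t = 0 :=
        (Finset.sum_eq_zero_iff_of_nonneg fun j _ => hnn y x j).mp h1 t (Finset.mem_univ t)
      simp [h1, h2]
    · have hm := hchain y x t
      have key : (∑ y', p y' x t) * ((∑ t', p y x t') / ∑ y', ∑ t', p y' x t') = p y x t := by
        field_simp
        linarith [hm]
      calc (∑ y', p y' x t) * (((∑ t', p y x t') / ∑ y', ∑ t', p y' x t') *
            Real.log (((∑ t', p y x t') / ∑ y', ∑ t', p y' x t') /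
              ((∑ x', p y x' t) / ∑ y', ∑ x', p y' x' t)))
          = ((∑ y', p y' x t) * ((∑ t', p y x t') / ∑ y', ∑ t', p y' x t')) *
            Real.log (((∑ t', p y x t') / ∑ y', ∑ t', p y' x t') /
              ((∑ x', p y x' t) / ∑ y', ∑ x', p y' x' t)) := by ring
        _ = p y x t *
            Real.log (((∑ t', p y x t') / ∑ y', ∑ t', p y' x t') /
              ((∑ x', p y x' t) / ∑ y', ∑ x', p y' x' t)) := by rw [key]
  rw [hTY, hXY, hKL]
  rw [← Finset.sum_add_distrib]
  refine Finset.sum_congr rfl fun x _ => ?_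
  rw [← Finset.sum_add_distrib]
  refine Finset.sum_congr rfl fun t _ => ?_
  rw [← Finset.sum_add_distrib]
  refine Finset.sum_congr rfl fun y _ => ?_
  by_cases h0 : p y x t = 0
  · simp [h0]
  · have hpos : 0 < p y x t := lt_of_le_of_ne (hnn y x t) (Ne.symm h0)
    have hyx : 0 < ∑ t', p y x t' :=
      hpos.trans_le (Finset.single_le_sum (fun i _ => hnn y x i) (Finset.mem_univ t))
    have hyt : 0 < ∑ x', p y x' t :=
      hpos.trans_le (Finset.single_le_sum (fun i _ => hnn y i t) (Finset.mem_univ x))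
    have hx : 0 < ∑ y', ∑ t', p y' x t' :=
      hyx.trans_le (Finset.single_le_sum (fun i _ => Finset.sum_nonneg fun j _ => hnn i x j)
        (Finset.mem_univ y))
    have ht : 0 < ∑ y', ∑ x', p y' x' t :=
      hyt.trans_le (Finset.single_le_sum (fun i _ => Finset.sum_nonneg fun j _ => hnn i j t)
        (Finset.mem_univ y))
    have hy1 : 0 < ∑ t', ∑ x', p y x' t' :=
      hyt.trans_le (Finset.single_le_sum (fun i _ => Finset.sum_nonneg fun j _ => hnn y j i)
        (Finset.mem_univ t))
    have hy2 : 0 < ∑ x', ∑ t', p y x' t' :=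
      hyx.trans_le (Finset.single_le_sum (fun i _ => Finset.sum_nonneg fun j _ => hnn y i j)
        (Finset.mem_univ x))
    have hcomm : (∑ t', ∑ x', p y x' t') = ∑ x', ∑ t', p y x' t' := Finset.sum_comm
    rw [hcomm, ← mul_add]
    congr 1
    rw [Real.log_div hyt.ne' (mul_pos ht hy2).ne', Real.log_mul ht.ne' hy2.ne',
        Real.log_div (div_pos hyx hx).ne' (div_pos hyt ht).ne',
        Real.log_div hyx.ne' hx.ne', Real.log_div hyt.ne' ht.ne',
        Real.log_div hyx.ne' (mul_pos hx hy2).ne', Real.log_mul hx.ne' hy2.ne']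
    ring
end

section
/- Under the MultiView assumption with ε_info = 0 (i.e., I(Y; X2 | X1) = 0 and I(Y; X1 | X2) = 0), any representation Z1 of X1 that is sufficient for X2 (i.e., I(X2; X1 | Z1) = 0) is also sufficient for Y, i.e., I(Y; X1 | Z1) = 0. -/
open scoped BigOperators

lemma le_sum_of_mem {ι : Type*} [Fintype ι] {f : ι → ℝ} (h0 : ∀ i, 0 ≤ f i) (i : ι) :
    f i ≤ ∑ j, f j := Finset.single_le_sum (fun j _ => h0 j) (Finset.mem_univ i)

lemma sum_rot3 {α β γ : Type*} [Fintype α] [Fintype β] [Fintype γ]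
    {f : α → β → γ → ℝ} : ∑ a, ∑ b, ∑ c, f a b c = ∑ c, ∑ a, ∑ b, f a b c := by
  have e1 : ∑ a, ∑ b, ∑ c, f a b c = ∑ a, ∑ c, ∑ b, f a b c :=
    Finset.sum_congr rfl fun a _ => Finset.sum_comm
  rw [e1]
  exact Finset.sum_comm

lemma triple_sum_zero {α β γ : Type*} [Fintype α] [Fintype β] [Fintype γ]
    {f : α → β → γ → ℝ} (h0 : ∀ a b c, 0 ≤ f a b c)
    (h : ∑ a, ∑ b, ∑ c, f a b c = 0) : ∀ a b c, f a b c = 0 := by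
  intro a b c
  have h1 : ∀ a ∈ (Finset.univ : Finset α), (0:ℝ) ≤ ∑ b, ∑ c, f a b c :=
    fun a _ => Finset.sum_nonneg fun b _ => Finset.sum_nonneg fun c _ => h0 a b c
  have h2 := (Finset.sum_eq_zero_iff_of_nonneg h1).1 h a (Finset.mem_univ a)
  have h3 : ∀ b ∈ (Finset.univ : Finset β), (0:ℝ) ≤ ∑ c, f a b c :=
    fun b _ => Finset.sum_nonneg fun c _ => h0 a b c
  have h4 := (Finset.sum_eq_zero_iff_of_nonneg h3).1 h2 b (Finset.mem_univ b)
  exact (Finset.sum_eq_zero_iff_of_nonneg (fun c _ => h0 a b c)).1 h4 c (Finset.mem_univ c)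

lemma cmi_zero_factor {α β γ : Type*} [Fintype α] [Fintype β] [Fintype γ]
    (p : α → β → γ → ℝ) (hp : IsPMF3 p) (h : CMI p = 0) :
    ∀ a b c, p a b c * (∑ a', ∑ b', p a' b' c) = (∑ b', p a b' c) * (∑ a', p a' b c) := by
  obtain ⟨h0, h1⟩ := hp
  set S : γ → ℝ := fun c => ∑ a', ∑ b', p a' b' c with hS
  set A : α → γ → ℝ := fun a c => ∑ b', p a b' c with hA
  set B : β → γ → ℝ := fun b c => ∑ a', p a' b c with hB
  have hA0 : ∀ a c, 0 ≤ A a c := fun a c => Finset.sum_nonneg fun b _ => h0 a b c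
  have hB0 : ∀ b c, 0 ≤ B b c := fun b c => Finset.sum_nonneg fun a _ => h0 a b c
  have hS0 : ∀ c, 0 ≤ S c := fun c => Finset.sum_nonneg fun a _ => hA0 a c
  have hSA : ∀ c, S c = ∑ a, A a c := fun c => rfl
  have hSB : ∀ c, S c = ∑ b, B b c := fun c => Finset.sum_comm
  have hpA : ∀ a b c, p a b c ≤ A a c := fun a b c => le_sum_of_mem (fun b' => h0 a b' c) b
  have hpB : ∀ a b c, p a b c ≤ B b c := fun a b c => le_sum_of_mem (fun a' => h0 a' b c) a
  have hAS : ∀ a c, A a c ≤ S c := by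
    intro a c; rw [hSA]; exact le_sum_of_mem (fun a' => hA0 a' c) a
  set Q : α → β → γ → ℝ := fun a b c => A a c * B b c / S c with hQ
  have hQ0 : ∀ a b c, 0 ≤ Q a b c := fun a b c =>
    div_nonneg (mul_nonneg (hA0 a c) (hB0 b c)) (hS0 c)
  set f : α → β → γ → ℝ := fun a b c =>
    p a b c * Real.log (S c * p a b c / (A a c * B b c)) - p a b c + Q a b c with hf
  have hQsum : ∀ c, ∑ a, ∑ b, Q a b c = S c := by
    intro c
    by_cases hSc : S c = 0
    · have hAz : ∀ a, A a c = 0 := by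
        intro a
        have h1 := hAS a c
        have h2 := hA0 a c
        linarith [hAS a c, hA0 a c, hSc ▸ (le_of_eq hSc.symm)]
      rw [hSc]
      apply Finset.sum_eq_zero; intro a _
      apply Finset.sum_eq_zero; intro b _
      simp [hQ, hAz a]
    · have e : ∑ a, ∑ b, Q a b c = (∑ a, A a c) * (∑ b, B b c) / S c := by
        rw [Finset.sum_mul, Finset.sum_div]
        apply Finset.sum_congr rfl; intro a _
        rw [Finset.mul_sum, Finset.sum_div]
      rw [e, ← hSA, ← hSB]
      field_simp
  have hQtot : ∑ a, ∑ b, ∑ c, Q a b c = 1 := by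
    rw [sum_rot3]
    rw [Finset.sum_congr rfl fun c _ => hQsum c]
    rw [← sum_rot3 (f := p)]
    exact h1
  have hf0 : ∀ a b c, 0 ≤ f a b c := by
    intro a b c
    rcases eq_or_lt_of_le (h0 a b c) with hz | hpos
    · simp only [hf, ← hz]
      simpa using hQ0 a b c
    · have hApos : 0 < A a c := lt_of_lt_of_le hpos (hpA a b c)
      have hBpos : 0 < B b c := lt_of_lt_of_le hpos (hpB a b c)
      have hSpos : 0 < S c := lt_of_lt_of_le hApos (hAS a c)
      have hx : (0:ℝ) < A a c * B b c / (S c * p a b c) :=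
        div_pos (mul_pos hApos hBpos) (mul_pos hSpos hpos)
      have hlog := Real.log_le_sub_one_of_pos hx
      have hiv : Real.log (S c * p a b c / (A a c * B b c)) =
          - Real.log (A a c * B b c / (S c * p a b c)) := by
        rw [← Real.log_inv]
        congr 1
        rw [inv_div]
      have hxval : A a c * B b c / (S c * p a b c) = Q a b c / p a b c := by
        simp only [hQ]
        field_simp
      have hdiv : p a b c * (Q a b c / p a b c - 1) = Q a b c - p a b c := by
        field_simp
      have hlog' : Real.log (Q a b c / p a b c) ≤ Q a b c / p a b c - 1 := by
        rw [← hxval]; exact hlog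
      have hmul := mul_le_mul_of_nonneg_left hlog' (le_of_lt hpos)
      rw [hdiv] at hmul
      simp only [hf]
      rw [hiv, hxval, mul_neg]
      linarith
  have hsumf : ∑ a, ∑ b, ∑ c, f a b c = 0 := by
    have e : ∑ a, ∑ b, ∑ c, f a b c =
        (∑ a, ∑ b, ∑ c, p a b c * Real.log (S c * p a b c / (A a c * B b c)))
        - (∑ a, ∑ b, ∑ c, p a b c) + (∑ a, ∑ b, ∑ c, Q a b c) := by
      simp only [hf, Finset.sum_add_distrib, Finset.sum_sub_distrib]
    have hCMI : (∑ a, ∑ b, ∑ c, p a b c * Real.log (S c * p a b c / (A a c * B b c))) = CMI p := rfl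
    rw [e, h1, hQtot, hCMI, h]
    ring
  have hfz := triple_sum_zero hf0 hsumf
  intro a b c
  show p a b c * S c = A a c * B b c
  rcases eq_or_lt_of_le (h0 a b c) with hz | hpos
  · have hQz : A a c * B b c / S c = 0 := by
      have hfe := hfz a b c
      simp only [hf] at hfe
      rw [← hz] at hfe
      simp only [zero_mul, zero_sub, sub_zero, neg_zero, zero_add] at hfe
      exact hfe
    have hABz : A a c * B b c = 0 := by
      rcases div_eq_zero_iff.1 hQz with hAB | hSc
      · exact hAB
      · have hAz : A a c = 0 := le_antisymm (hSc ▸ hAS a c) (hA0 a c)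
        rw [hAz, zero_mul]
    rw [← hz, zero_mul, hABz]
  · have hApos : 0 < A a c := lt_of_lt_of_le hpos (hpA a b c)
    have hBpos : 0 < B b c := lt_of_lt_of_le hpos (hpB a b c)
    have hSpos : 0 < S c := lt_of_lt_of_le hApos (hAS a c)
    have hQpos : 0 < Q a b c := div_pos (mul_pos hApos hBpos) hSpos
    have hfeq := hfz a b c
    have hx : (0:ℝ) < A a c * B b c / (S c * p a b c) :=
      div_pos (mul_pos hApos hBpos) (mul_pos hSpos hpos)
    have hxval : A a c * B b c / (S c * p a b c) = Q a b c / p a b c := by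
      simp only [hQ]; field_simp
    have hiv : Real.log (S c * p a b c / (A a c * B b c)) =
        - Real.log (A a c * B b c / (S c * p a b c)) := by
      rw [← Real.log_inv]; congr 1; rw [inv_div]
    have hdiv : p a b c * (Q a b c / p a b c - 1) = Q a b c - p a b c := by
      field_simp
    have hPQ : p a b c = Q a b c := by
      by_contra hne
      have hxne : A a c * B b c / (S c * p a b c) ≠ 1 := by
        rw [hxval]
        intro h1'
        exact hne ((div_eq_one_iff_eq (ne_of_gt hpos)).1 h1').symm
      have hlog := Real.log_lt_sub_one_of_pos hx hxne
      rw [hxval] at hlog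
      have hstrict := (mul_lt_mul_iff_right₀ hpos).2 hlog
      rw [hdiv] at hstrict
      simp only [hf] at hfeq
      rw [hiv, hxval, mul_neg] at hfeq
      linarith
    have hfin : Q a b c * S c = A a c * B b c := by
      show A a c * B b c / S c * S c = A a c * B b c
      field_simp
    rw [hPQ]; exact hfin

lemma sum_rot4 {α β γ δ : Type*} [Fintype α] [Fintype β] [Fintype γ] [Fintype δ]
    {f : α → β → γ → δ → ℝ} :
    ∑ a, ∑ b, ∑ c, ∑ d, f a b c d = ∑ d, ∑ a, ∑ b, ∑ c, f a b c d := by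
  have e1 : ∑ a, ∑ b, ∑ c, ∑ d, f a b c d = ∑ a, ∑ d, ∑ b, ∑ c, f a b c d :=
    Finset.sum_congr rfl fun a _ => sum_rot3
  rw [e1]
  exact Finset.sum_comm

lemma cmi_eq_zero_of_factor {α β γ : Type*} [Fintype α] [Fintype β] [Fintype γ]
    (p : α → β → γ → ℝ) (h0 : ∀ a b c, 0 ≤ p a b c)
    (hfac : ∀ a b c, 0 < p a b c →
      p a b c * (∑ a', ∑ b', p a' b' c) = (∑ b', p a b' c) * (∑ a', p a' b c)) :
    CMI p = 0 := by
  unfold CMI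
  apply Finset.sum_eq_zero; intro a _
  apply Finset.sum_eq_zero; intro b _
  apply Finset.sum_eq_zero; intro c _
  rcases eq_or_lt_of_le (h0 a b c) with hz | hpos
  · rw [← hz, zero_mul]
  · have hS : p a b c ≤ ∑ a', ∑ b', p a' b' c := by
      calc p a b c ≤ ∑ b', p a b' c := le_sum_of_mem (fun b' => h0 a b' c) b
      _ ≤ ∑ a', ∑ b', p a' b' c :=
        le_sum_of_mem (fun a' => Finset.sum_nonneg fun b' _ => h0 a' b' c) a
    have hSpos : 0 < ∑ a', ∑ b', p a' b' c := lt_of_lt_of_le hpos hS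
    have hone : ((∑ a', ∑ b', p a' b' c) * p a b c) /
        ((∑ b', p a b' c) * (∑ a', p a' b c)) = 1 := by
      rw [← hfac a b c hpos, mul_comm (∑ a', ∑ b', p a' b' c) (p a b c)]
      exact div_self (ne_of_gt (mul_pos hpos hSpos))
    rw [hone, Real.log_one, mul_zero]

/-- Under the MultiView assumption with ε_info = 0
(I(Y;X2|X1) = 0 and I(Y;X1|X2) = 0), any representation Z1 of X1
(Markov chain (Y,X2)–X1–Z1) that is sufficient for X2 (I(X2;X1|Z1) = 0)
is also sufficient for Y: I(Y;X1|Z1) = 0. -/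

theorem multiview_sufficiency_transfer
    {Y X2 X1 Z1 : Type*} [Fintype Y] [Fintype X2] [Fintype X1] [Fintype Z1]
    (p : Y → X2 → X1 → Z1 → ℝ) (hp : IsPMF4 p)
    (hchain : Markov fun (w : Y × X2) x1 z1 => p w.1 w.2 x1 z1)
    (hmv1 : CMI (fun y x2 x1 => ∑ z1, p y x2 x1 z1) = 0)
    (hmv2 : CMI (fun y x1 x2 => ∑ z1, p y x2 x1 z1) = 0)
    (hsuff : CMI (fun x2 x1 z1 => ∑ y, p y x2 x1 z1) = 0) :
    CMI (fun y x1 z1 => ∑ x2, p y x2 x1 z1) = 0 := by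
  obtain ⟨hp0, hp1⟩ := hp
  set a3 : Y → X2 → X1 → ℝ := fun y x2 x1 => ∑ z, p y x2 x1 z with ha3
  set e3 : X2 → X1 → Z1 → ℝ := fun x2 x1 z => ∑ y, p y x2 x1 z with he3
  set c2 : X1 → Z1 → ℝ := fun x1 z => ∑ y, ∑ x2, p y x2 x1 z with hc2
  set d2 : X2 → X1 → ℝ := fun x2 x1 => ∑ y, ∑ z, p y x2 x1 z with hd2
  set f2 : X2 → Z1 → ℝ := fun x2 z => ∑ x1, ∑ y, p y x2 x1 z with hf2
  set g2 : Y → X2 → ℝ := fun y x2 => ∑ x1, ∑ z, p y x2 x1 z with hg2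
  set s2 : Y → Z1 → ℝ := fun y z => ∑ x1, ∑ x2, p y x2 x1 z with hs2
  set r3 : Y → X1 → Z1 → ℝ := fun y x1 z => ∑ x2, p y x2 x1 z with hr3
  set P1 : X1 → ℝ := fun x1 => ∑ y, ∑ x2, ∑ z, p y x2 x1 z with hP1
  set P2 : X2 → ℝ := fun x2 => ∑ y, ∑ x1, ∑ z, p y x2 x1 z with hP2
  set Pz : Z1 → ℝ := fun z => ∑ x2, ∑ x1, ∑ y, p y x2 x1 z with hPz
  -- nonnegativity of marginals
  have ha30 : ∀ y x2 x1, 0 ≤ a3 y x2 x1 :=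
    fun y x2 x1 => Finset.sum_nonneg fun z _ => hp0 y x2 x1 z
  have he30 : ∀ x2 x1 z, 0 ≤ e3 x2 x1 z :=
    fun x2 x1 z => Finset.sum_nonneg fun y _ => hp0 y x2 x1 z
  have hr30 : ∀ y x1 z, 0 ≤ r3 y x1 z :=
    fun y x1 z => Finset.sum_nonneg fun x2 _ => hp0 y x2 x1 z
  have hc20 : ∀ x1 z, 0 ≤ c2 x1 z :=
    fun x1 z => Finset.sum_nonneg fun y _ => hr30 y x1 z
  have hg20 : ∀ y x2, 0 ≤ g2 y x2 :=
    fun y x2 => Finset.sum_nonneg fun x1 _ => ha30 y x2 x1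
  have hP20 : ∀ x2, 0 ≤ P2 x2 :=
    fun x2 => Finset.sum_nonneg fun y _ => hg20 y x2
  have hP10 : ∀ x1, 0 ≤ P1 x1 :=
    fun x1 => Finset.sum_nonneg fun y _ => Finset.sum_nonneg fun x2 _ => ha30 y x2 x1
  have hPz0 : ∀ z, 0 ≤ Pz z :=
    fun z => Finset.sum_nonneg fun x2 _ => Finset.sum_nonneg fun x1 _ => he30 x2 x1 z
  -- reorder bridges
  have hP1c : ∀ x1, P1 x1 = ∑ z, c2 x1 z := fun x1 => sum_rot3
  have hPzc : ∀ z, Pz z = ∑ x1, c2 x1 z := fun z => sum_rot3.symm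
  have hc2' : ∀ x1 z, (∑ x2, ∑ y, p y x2 x1 z) = c2 x1 z := fun x1 z => Finset.sum_comm
  have hSG : ∀ z, (∑ y, ∑ x1, ∑ x2, p y x2 x1 z) = Pz z := by
    intro z
    have e1 : (∑ y, ∑ x1, ∑ x2, p y x2 x1 z) = ∑ x2, ∑ y, ∑ x1, p y x2 x1 z := sum_rot3
    rw [e1]
    exact Finset.sum_congr rfl fun x2 _ => Finset.sum_comm
  -- domination
  have hpa3 : ∀ y x2 x1 z, p y x2 x1 z ≤ a3 y x2 x1 :=
    fun y x2 x1 z => le_sum_of_mem (fun z' => hp0 y x2 x1 z') z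
  have ha3g2 : ∀ y x2 x1, a3 y x2 x1 ≤ g2 y x2 :=
    fun y x2 x1 => le_sum_of_mem (fun x1' => ha30 y x2 x1') x1
  have hg2P2 : ∀ y x2, g2 y x2 ≤ P2 x2 :=
    fun y x2 => le_sum_of_mem (fun y' => hg20 y' x2) y
  have hrc : ∀ y x1 z, r3 y x1 z ≤ c2 x1 z :=
    fun y x1 z => le_sum_of_mem (fun y' => hr30 y' x1 z) y
  have hcP1 : ∀ x1 z, c2 x1 z ≤ P1 x1 := by
    intro x1 z; rw [hP1c x1]; exact le_sum_of_mem (fun z' => hc20 x1 z') z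
  have hcPz : ∀ x1 z, c2 x1 z ≤ Pz z := by
    intro x1 z; rw [hPzc z]; exact le_sum_of_mem (fun x1' => hc20 x1' z) x1
  -- Markov identity
  have M : ∀ y x2 x1 z, p y x2 x1 z * P1 x1 = a3 y x2 x1 * c2 x1 z := by
    intro y x2 x1 z
    have h := hchain (y, x2) x1 z
    simp only [Fintype.sum_prod_type] at h
    exact h
  -- factorization from hmv2
  have hq2 : IsPMF3 (fun y x1 x2 => ∑ z1, p y x2 x1 z1) := by
    refine ⟨fun y x1 x2 => Finset.sum_nonneg fun z _ => hp0 y x2 x1 z, ?_⟩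
    show ∑ y, ∑ x1, ∑ x2, ∑ z, p y x2 x1 z = 1
    rw [Finset.sum_congr rfl fun y (_ : y ∈ Finset.univ) =>
      (Finset.sum_comm : ∑ x1, ∑ x2, ∑ z, p y x2 x1 z = ∑ x2, ∑ x1, ∑ z, p y x2 x1 z)]
    exact hp1
  have F2 : ∀ y x1 x2, a3 y x2 x1 * P2 x2 = g2 y x2 * d2 x2 x1 :=
    cmi_zero_factor _ hq2 hmv2
  -- factorization from hsuff
  have hq3 : IsPMF3 (fun x2 x1 z => ∑ y, p y x2 x1 z) := by
    refine ⟨fun x2 x1 z => Finset.sum_nonneg fun y _ => hp0 y x2 x1 z, ?_⟩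
    show ∑ x2, ∑ x1, ∑ z, ∑ y, p y x2 x1 z = 1
    rw [sum_rot4]
    exact hp1
  have F3 : ∀ x2 x1 z, e3 x2 x1 z * Pz z = f2 x2 z * c2 x1 z := by
    intro x2 x1 z
    have h := cmi_zero_factor _ hq3 hsuff x2 x1 z
    rw [← hc2' x1 z]
    exact h
  -- E2 : sum of Markov over y
  have E2 : ∀ x2 x1 z, e3 x2 x1 z * P1 x1 = d2 x2 x1 * c2 x1 z := by
    intro x2 x1 z
    have e1 : e3 x2 x1 z * P1 x1 = ∑ y, p y x2 x1 z * P1 x1 := Finset.sum_mul _ _ _ ..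
    rw [e1, Finset.sum_congr rfl fun y (_ : y ∈ Finset.univ) => M y x2 x1 z,
      ← Finset.sum_mul]
  have star : ∀ x2 x1 z, c2 x1 z * (d2 x2 x1 * Pz z) = c2 x1 z * (f2 x2 z * P1 x1) := by
    intro x2 x1 z
    linear_combination P1 x1 * F3 x2 x1 z - Pz z * E2 x2 x1 z
  have T' : ∀ y x2 x1 z,
      p y x2 x1 z * Pz z * P1 x1 * P2 x2 = c2 x1 z * g2 y x2 * f2 x2 z * P1 x1 := by
    intro y x2 x1 z
    linear_combination (Pz z * P2 x2) * M y x2 x1 z + (c2 x1 z * Pz z) * F2 y x1 x2 +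
      g2 y x2 * star x2 x1 z
  have T : ∀ y x2 x1 z,
      p y x2 x1 z * (Pz z * P1 x1) = g2 y x2 * f2 x2 z / P2 x2 * (c2 x1 z * P1 x1) := by
    intro y x2 x1 z
    rcases eq_or_lt_of_le (hP20 x2) with hz | hpos
    · have hgz : g2 y x2 = 0 := le_antisymm (hz ▸ hg2P2 y x2) (hg20 y x2)
      have hpz : p y x2 x1 z = 0 := le_antisymm
        (le_trans (le_trans (hpa3 y x2 x1 z) (ha3g2 y x2 x1)) (le_of_eq hgz))
        (hp0 y x2 x1 z)
      rw [hpz, hgz]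
      simp
    · apply mul_right_cancel₀ (ne_of_gt hpos)
      have hre : g2 y x2 * f2 x2 z / P2 x2 * (c2 x1 z * P1 x1) * P2 x2 =
          c2 x1 z * g2 y x2 * f2 x2 z * P1 x1 := by
        field_simp
      rw [hre]
      linear_combination T' y x2 x1 z
  set K : Y → Z1 → ℝ := fun y z => ∑ x2, g2 y x2 * f2 x2 z / P2 x2 with hK
  have sumT : ∀ y x1 z, r3 y x1 z * (Pz z * P1 x1) = K y z * (c2 x1 z * P1 x1) := by
    intro y x1 z
    calc r3 y x1 z * (Pz z * P1 x1) = ∑ x2, p y x2 x1 z * (Pz z * P1 x1) := Finset.sum_mul _ _ _ ..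
      _ = ∑ x2, g2 y x2 * f2 x2 z / P2 x2 * (c2 x1 z * P1 x1) :=
        Finset.sum_congr rfl fun x2 _ => T y x2 x1 z
      _ = K y z * (c2 x1 z * P1 x1) := (Finset.sum_mul _ _ _).symm
  have A' : ∀ y x1 z, r3 y x1 z * Pz z = K y z * c2 x1 z := by
    intro y x1 z
    rcases eq_or_lt_of_le (hP10 x1) with hz | hpos
    · have hc : c2 x1 z = 0 := le_antisymm (hz ▸ hcP1 x1 z) (hc20 x1 z)
      have hr : r3 y x1 z = 0 := le_antisymm (hc ▸ hrc y x1 z) (hr30 y x1 z)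
      rw [hr, hc, zero_mul, mul_zero]
    · apply mul_right_cancel₀ (ne_of_gt hpos)
      linear_combination sumT y x1 z
  have sumA : ∀ y z, s2 y z * Pz z = K y z * Pz z := by
    intro y z
    calc s2 y z * Pz z = ∑ x1, r3 y x1 z * Pz z := Finset.sum_mul _ _ _ ..
      _ = ∑ x1, K y z * c2 x1 z := Finset.sum_congr rfl fun x1 _ => A' y x1 z
      _ = K y z * ∑ x1, c2 x1 z := (Finset.mul_sum _ _ _).symm
      _ = K y z * Pz z := by rw [← hPzc z]
  have G : ∀ y x1 z, r3 y x1 z * Pz z = s2 y z * c2 x1 z := by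
    intro y x1 z
    rcases eq_or_lt_of_le (hPz0 z) with hz | hpos
    · have hc : c2 x1 z = 0 := le_antisymm (hz ▸ hcPz x1 z) (hc20 x1 z)
      have hr : r3 y x1 z = 0 := le_antisymm (hc ▸ hrc y x1 z) (hr30 y x1 z)
      rw [hr, hc, zero_mul, mul_zero]
    · have hsK : s2 y z = K y z := mul_right_cancel₀ (ne_of_gt hpos) (sumA y z)
      rw [hsK]
      exact A' y x1 z
  have Gfac : ∀ y x1 z, (∑ x2, p y x2 x1 z) * (∑ y', ∑ x1', ∑ x2, p y' x2 x1' z) =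
      (∑ x1', ∑ x2, p y x2 x1' z) * (∑ y', ∑ x2, p y' x2 x1 z) := by
    intro y x1 z
    rw [hSG z]
    exact G y x1 z
  exact cmi_eq_zero_of_factor _
    (fun y x1 z => Finset.sum_nonneg fun x2 _ => hp0 y x2 x1 z)
    (fun y x1 z _ => Gfac y x1 z)
end

section
/- Under the MultiView assumption I(Y; X1 | X2) ≤ ε_info, for any representation Z1 of X1 such that (Y, X2)–X1–Z1 is a Markov chain, one has I(X1; Y | Z1) ≤ I(X1; X2 | Z1) + ε_info. -/
open scoped BigOperators

section helpers2
variable {A B C : Type*} [Fintype A] [Fintype B] [Fintype C]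
lemma MV_le_sum1 (f : A → ℝ) (h : ∀ a, 0 ≤ f a) (a : A) : f a ≤ ∑ a', f a' :=
  Finset.single_le_sum (fun i _ => h i) (Finset.mem_univ a)
lemma MV_le_sum2 (f : A → B → ℝ) (h : ∀ a b, 0 ≤ f a b) (a : A) (b : B) :
    f a b ≤ ∑ a', ∑ b', f a' b' :=
  (MV_le_sum1 (f a) (h a) b).trans
    (MV_le_sum1 (fun a' => ∑ b', f a' b') (fun a' => Finset.sum_nonneg fun b' _ => h a' b') a)
lemma MV_le_sum3 (f : A → B → C → ℝ) (h : ∀ a b c, 0 ≤ f a b c) (a : A) (b : B) (c : C) :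
    f a b c ≤ ∑ a', ∑ b', ∑ c', f a' b' c' :=
  (MV_le_sum2 (f a) (h a) b c).trans
    (MV_le_sum1 (fun a' => ∑ b', ∑ c', f a' b' c')
      (fun a' => Finset.sum_nonneg fun b' _ => Finset.sum_nonneg fun c' _ => h a' b' c') a)
end helpers2

section helpers
variable {A B C D : Type*} [Fintype A] [Fintype B] [Fintype C] [Fintype D]
lemma MV_s23 (f : A → B → C → ℝ) : ∑ a, ∑ b, ∑ c, f a b c = ∑ a, ∑ c, ∑ b, f a b c :=
  Finset.sum_congr rfl fun _ _ => Finset.sum_comm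
lemma MV_s34 (f : A → B → C → D → ℝ) :
    ∑ a, ∑ b, ∑ c, ∑ d, f a b c d = ∑ a, ∑ b, ∑ d, ∑ c, f a b c d :=
  Finset.sum_congr rfl fun _ _ => Finset.sum_congr rfl fun _ _ => Finset.sum_comm
end helpers

namespace MVm
variable {Y X2 X1 Z1 : Type*} [Fintype Y] [Fintype X2] [Fintype X1] [Fintype Z1]
variable (p : Y → X2 → X1 → Z1 → ℝ)

def mX1 (x1 : X1) : ℝ := ∑ y, ∑ x2, ∑ z1, p y x2 x1 z1
def mZ (z1 : Z1) : ℝ := ∑ y, ∑ x2, ∑ x1, p y x2 x1 z1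
def mX2 (x2 : X2) : ℝ := ∑ y, ∑ x1, ∑ z1, p y x2 x1 z1
def mX1Z1 (x1 : X1) (z1 : Z1) : ℝ := ∑ y, ∑ x2, p y x2 x1 z1
def mYZ1 (y : Y) (z1 : Z1) : ℝ := ∑ x2, ∑ x1, p y x2 x1 z1
def mX2Z1 (x2 : X2) (z1 : Z1) : ℝ := ∑ y, ∑ x1, p y x2 x1 z1
def mYX2 (y : Y) (x2 : X2) : ℝ := ∑ x1, ∑ z1, p y x2 x1 z1
def mYX1 (y : Y) (x1 : X1) : ℝ := ∑ x2, ∑ z1, p y x2 x1 z1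
def mX1X2 (x2 : X2) (x1 : X1) : ℝ := ∑ y, ∑ z1, p y x2 x1 z1
def mYX2X1 (y : Y) (x2 : X2) (x1 : X1) : ℝ := ∑ z1, p y x2 x1 z1
def mYX1Z1 (y : Y) (x1 : X1) (z1 : Z1) : ℝ := ∑ x2, p y x2 x1 z1
def mX2X1Z1 (x2 : X2) (x1 : X1) (z1 : Z1) : ℝ := ∑ y, p y x2 x1 z1

noncomputable def LA (y : Y) (x1 : X1) (z1 : Z1) : ℝ :=
  Real.log (mZ p z1 * mYX1Z1 p y x1 z1 / (mX1Z1 p x1 z1 * mYZ1 p y z1))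
noncomputable def LB (x2 : X2) (x1 : X1) (z1 : Z1) : ℝ :=
  Real.log (mZ p z1 * mX2X1Z1 p x2 x1 z1 / (mX1Z1 p x1 z1 * mX2Z1 p x2 z1))
noncomputable def LC (y : Y) (x2 : X2) (x1 : X1) : ℝ :=
  Real.log (mX2 p x2 * mYX2X1 p y x2 x1 / (mYX2 p y x2 * mX1X2 p x2 x1))
noncomputable def G (y : Y) (x2 : X2) (x1 : X1) (z1 : Z1) : ℝ :=
  (mYX1 p y x1 * mX1Z1 p x1 z1 / mX1 p x1) *
    (mX2Z1 p x2 z1 * mYX2 p y x2 / (mYZ1 p y z1 * mX2 p x2))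

lemma A_eq : CMI (fun x1 y z1 => ∑ x2, p y x2 x1 z1)
    = ∑ y, ∑ x2, ∑ z1, ∑ x1, p y x2 x1 z1 * LA p y x1 z1 := by
  have h1 : CMI (fun x1 y z1 => ∑ x2, p y x2 x1 z1)
      = ∑ x1, ∑ y, ∑ z1, mYX1Z1 p y x1 z1 * LA p y x1 z1 := by
    simp only [CMI, LA, mYX1Z1, mZ, mX1Z1, mYZ1]
    refine Finset.sum_congr rfl fun x1 _ => Finset.sum_congr rfl fun y _ =>
      Finset.sum_congr rfl fun z1 _ => ?_
    have hz : (∑ x1', ∑ y', ∑ x2, p y' x2 x1' z1) = ∑ y', ∑ x2, ∑ x1', p y' x2 x1' z1 :=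
      Finset.sum_comm.trans (MV_s23 _)
    have he : (∑ x1', ∑ x2, p y x2 x1' z1) = ∑ x2, ∑ x1', p y x2 x1' z1 := Finset.sum_comm
    rw [hz, he]
  rw [h1]
  calc ∑ x1, ∑ y, ∑ z1, mYX1Z1 p y x1 z1 * LA p y x1 z1
      = ∑ x1, ∑ y, ∑ z1, ∑ x2, p y x2 x1 z1 * LA p y x1 z1 := by
        refine Finset.sum_congr rfl fun x1 _ => Finset.sum_congr rfl fun y _ =>
          Finset.sum_congr rfl fun z1 _ => ?_
        rw [mYX1Z1, Finset.sum_mul]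
    _ = ∑ y, ∑ x1, ∑ z1, ∑ x2, p y x2 x1 z1 * LA p y x1 z1 := Finset.sum_comm
    _ = ∑ y, ∑ x1, ∑ x2, ∑ z1, p y x2 x1 z1 * LA p y x1 z1 :=
        MV_s34 fun y x1 z1 x2 => p y x2 x1 z1 * LA p y x1 z1
    _ = ∑ y, ∑ x2, ∑ x1, ∑ z1, p y x2 x1 z1 * LA p y x1 z1 :=
        MV_s23 fun y x1 x2 => ∑ z1, p y x2 x1 z1 * LA p y x1 z1
    _ = ∑ y, ∑ x2, ∑ z1, ∑ x1, p y x2 x1 z1 * LA p y x1 z1 :=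
        MV_s34 fun y x2 x1 z1 => p y x2 x1 z1 * LA p y x1 z1

end MVm

namespace MVm
variable {Y X2 X1 Z1 : Type*} [Fintype Y] [Fintype X2] [Fintype X1] [Fintype Z1]
variable (p : Y → X2 → X1 → Z1 → ℝ)

lemma B_eq : CMI (fun x1 x2 z1 => ∑ y, p y x2 x1 z1)
    = ∑ y, ∑ x2, ∑ z1, ∑ x1, p y x2 x1 z1 * LB p x2 x1 z1 := by
  have h1 : CMI (fun x1 x2 z1 => ∑ y, p y x2 x1 z1)
      = ∑ x1, ∑ x2, ∑ z1, mX2X1Z1 p x2 x1 z1 * LB p x2 x1 z1 := by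
    simp only [CMI, LB, mX2X1Z1, mZ, mX1Z1, mX2Z1]
    refine Finset.sum_congr rfl fun x1 _ => Finset.sum_congr rfl fun x2 _ =>
      Finset.sum_congr rfl fun z1 _ => ?_
    have hz : (∑ x1', ∑ x2', ∑ y, p y x2' x1' z1) = ∑ y, ∑ x2', ∑ x1', p y x2' x1' z1 :=
      (Finset.sum_comm.trans (MV_s23 _)).trans Finset.sum_comm
    have hb : (∑ x2', ∑ y, p y x2' x1 z1) = ∑ y, ∑ x2', p y x2' x1 z1 := Finset.sum_comm
    have ha : (∑ x1', ∑ y, p y x2 x1' z1) = ∑ y, ∑ x1', p y x2 x1' z1 := Finset.sum_comm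
    rw [hz, hb, ha]
  rw [h1]
  calc ∑ x1, ∑ x2, ∑ z1, mX2X1Z1 p x2 x1 z1 * LB p x2 x1 z1
      = ∑ x1, ∑ x2, ∑ z1, ∑ y, p y x2 x1 z1 * LB p x2 x1 z1 := by
        refine Finset.sum_congr rfl fun x1 _ => Finset.sum_congr rfl fun x2 _ =>
          Finset.sum_congr rfl fun z1 _ => ?_
        rw [mX2X1Z1, Finset.sum_mul]
    _ = ∑ x2, ∑ x1, ∑ z1, ∑ y, p y x2 x1 z1 * LB p x2 x1 z1 := Finset.sum_comm
    _ = ∑ x2, ∑ x1, ∑ y, ∑ z1, p y x2 x1 z1 * LB p x2 x1 z1 :=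
        MV_s34 fun x2 x1 z1 y => p y x2 x1 z1 * LB p x2 x1 z1
    _ = ∑ x2, ∑ y, ∑ x1, ∑ z1, p y x2 x1 z1 * LB p x2 x1 z1 :=
        MV_s23 fun x2 x1 y => ∑ z1, p y x2 x1 z1 * LB p x2 x1 z1
    _ = ∑ y, ∑ x2, ∑ x1, ∑ z1, p y x2 x1 z1 * LB p x2 x1 z1 := Finset.sum_comm
    _ = ∑ y, ∑ x2, ∑ z1, ∑ x1, p y x2 x1 z1 * LB p x2 x1 z1 :=
        MV_s34 fun y x2 x1 z1 => p y x2 x1 z1 * LB p x2 x1 z1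

lemma C_eq : CMI (fun y x1 x2 => ∑ z1, p y x2 x1 z1)
    = ∑ y, ∑ x2, ∑ z1, ∑ x1, p y x2 x1 z1 * LC p y x2 x1 := by
  have h1 : CMI (fun y x1 x2 => ∑ z1, p y x2 x1 z1)
      = ∑ y, ∑ x1, ∑ x2, mYX2X1 p y x2 x1 * LC p y x2 x1 := by
    simp only [CMI, LC, mYX2X1, mX2, mYX2, mX1X2]
  rw [h1]
  calc ∑ y, ∑ x1, ∑ x2, mYX2X1 p y x2 x1 * LC p y x2 x1
      = ∑ y, ∑ x1, ∑ x2, ∑ z1, p y x2 x1 z1 * LC p y x2 x1 := by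
        refine Finset.sum_congr rfl fun y _ => Finset.sum_congr rfl fun x1 _ =>
          Finset.sum_congr rfl fun x2 _ => ?_
        rw [mYX2X1, Finset.sum_mul]
    _ = ∑ y, ∑ x2, ∑ x1, ∑ z1, p y x2 x1 z1 * LC p y x2 x1 :=
        MV_s23 fun y x1 x2 => ∑ z1, p y x2 x1 z1 * LC p y x2 x1
    _ = ∑ y, ∑ x2, ∑ z1, ∑ x1, p y x2 x1 z1 * LC p y x2 x1 :=
        MV_s34 fun y x2 x1 z1 => p y x2 x1 z1 * LC p y x2 x1

end MVm
namespace MVm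
variable {Y X2 X1 Z1 : Type*} [Fintype Y] [Fintype X2] [Fintype X1] [Fintype Z1]
variable (p : Y → X2 → X1 → Z1 → ℝ)

lemma term_ineq (hnn : ∀ y x2 x1 z1, 0 ≤ p y x2 x1 z1)
    (hMpt : ∀ y x2 x1 z1, p y x2 x1 z1 * mX1 p x1 = mYX2X1 p y x2 x1 * mX1Z1 p x1 z1)
    (hM1 : ∀ y x1 z1, mYX1Z1 p y x1 z1 * mX1 p x1 = mYX1 p y x1 * mX1Z1 p x1 z1)
    (hM2 : ∀ x2 x1 z1, mX2X1Z1 p x2 x1 z1 * mX1 p x1 = mX1X2 p x2 x1 * mX1Z1 p x1 z1)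
    (y : Y) (x2 : X2) (x1 : X1) (z1 : Z1) :
    p y x2 x1 z1 * LA p y x1 z1 - p y x2 x1 z1 * LB p x2 x1 z1
      - p y x2 x1 z1 * LC p y x2 x1 ≤ G p y x2 x1 z1 - p y x2 x1 z1 := by
  have nn1 : ∀ a b, (0:ℝ) ≤ ∑ x2', ∑ z1', p a x2' b z1' :=
    fun a b => Finset.sum_nonneg fun _ _ => Finset.sum_nonneg fun _ _ => hnn _ _ _ _
  rcases (hnn y x2 x1 z1).eq_or_lt with hq0 | hq
  · rw [← hq0]
    simp only [zero_mul, sub_zero, zero_sub, neg_zero, sub_self]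
    have hGnn : 0 ≤ G p y x2 x1 z1 := by
      unfold G mYX1 mX1Z1 mX1 mX2Z1 mYX2 mYZ1 mX2
      apply mul_nonneg <;> apply div_nonneg
      · exact mul_nonneg (Finset.sum_nonneg fun _ _ => Finset.sum_nonneg fun _ _ => hnn _ _ _ _)
          (Finset.sum_nonneg fun _ _ => Finset.sum_nonneg fun _ _ => hnn _ _ _ _)
      · exact Finset.sum_nonneg fun _ _ => Finset.sum_nonneg fun _ _ =>
          Finset.sum_nonneg fun _ _ => hnn _ _ _ _
      · exact mul_nonneg (Finset.sum_nonneg fun _ _ => Finset.sum_nonneg fun _ _ => hnn _ _ _ _)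
          (Finset.sum_nonneg fun _ _ => Finset.sum_nonneg fun _ _ => hnn _ _ _ _)
      · exact mul_nonneg (Finset.sum_nonneg fun _ _ => Finset.sum_nonneg fun _ _ => hnn _ _ _ _)
          (Finset.sum_nonneg fun _ _ => Finset.sum_nonneg fun _ _ =>
            Finset.sum_nonneg fun _ _ => hnn _ _ _ _)
    simpa using hGnn
  · -- positivity of all marginals
    have hm : 0 < mX1 p x1 :=
      hq.trans_le (MV_le_sum3 (fun y' x2' z1' => p y' x2' x1 z1')
        (fun _ _ _ => hnn _ _ _ _) y x2 z1)
    have hzp : 0 < mZ p z1 :=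
      hq.trans_le (MV_le_sum3 (fun y' x2' x1' => p y' x2' x1' z1)
        (fun _ _ _ => hnn _ _ _ _) y x2 x1)
    have hv : 0 < mX2 p x2 :=
      hq.trans_le (MV_le_sum3 (fun y' x1' z1' => p y' x2 x1' z1')
        (fun _ _ _ => hnn _ _ _ _) y x1 z1)
    have hd : 0 < mX1Z1 p x1 z1 :=
      hq.trans_le (MV_le_sum2 (fun y' x2' => p y' x2' x1 z1) (fun _ _ => hnn _ _ _ _) y x2)
    have he : 0 < mYZ1 p y z1 :=
      hq.trans_le (MV_le_sum2 (fun x2' x1' => p y x2' x1' z1) (fun _ _ => hnn _ _ _ _) x2 x1)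
    have hu : 0 < mX2Z1 p x2 z1 :=
      hq.trans_le (MV_le_sum2 (fun y' x1' => p y' x2 x1' z1) (fun _ _ => hnn _ _ _ _) y x1)
    have hg : 0 < mYX2 p y x2 :=
      hq.trans_le (MV_le_sum2 (fun x1' z1' => p y x2 x1' z1') (fun _ _ => hnn _ _ _ _) x1 z1)
    have hr : 0 < mYX1 p y x1 :=
      hq.trans_le (MV_le_sum2 (fun x2' z1' => p y x2' x1 z1') (fun _ _ => hnn _ _ _ _) x2 z1)
    have hh : 0 < mX1X2 p x2 x1 :=
      hq.trans_le (MV_le_sum2 (fun y' z1' => p y' x2 x1 z1') (fun _ _ => hnn _ _ _ _) y z1)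
    have hw : 0 < mYX2X1 p y x2 x1 :=
      hq.trans_le (MV_le_sum1 (fun z1' => p y x2 x1 z1') (fun _ => hnn _ _ _ _) z1)
    have hn : 0 < mYX1Z1 p y x1 z1 :=
      hq.trans_le (MV_le_sum1 (fun x2' => p y x2' x1 z1) (fun _ => hnn _ _ _ _) x2)
    have hs : 0 < mX2X1Z1 p x2 x1 z1 :=
      hq.trans_le (MV_le_sum1 (fun y' => p y' x2 x1 z1) (fun _ => hnn _ _ _ _) y)
    have hG : 0 < G p y x2 x1 z1 :=
      mul_pos (div_pos (mul_pos hr hd) hm) (div_pos (mul_pos hu hg) (mul_pos he hv))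
    -- solved forms
    have eN : mYX1Z1 p y x1 z1 = mYX1 p y x1 * mX1Z1 p x1 z1 / mX1 p x1 :=
      (eq_div_iff hm.ne').mpr (hM1 y x1 z1)
    have eS : mX2X1Z1 p x2 x1 z1 = mX1X2 p x2 x1 * mX1Z1 p x1 z1 / mX1 p x1 :=
      (eq_div_iff hm.ne').mpr (hM2 x2 x1 z1)
    have eQ : p y x2 x1 z1 = mYX2X1 p y x2 x1 * mX1Z1 p x1 z1 / mX1 p x1 :=
      (eq_div_iff hm.ne').mpr (hMpt y x2 x1 z1)
    have key : LA p y x1 z1 - LB p x2 x1 z1 - LC p y x2 x1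
        = Real.log (G p y x2 x1 z1 / p y x2 x1 z1) := by
      unfold LA LB LC
      rw [← Real.log_div (by positivity) (by positivity),
          ← Real.log_div (by positivity) (by positivity)]
      congr 1
      rw [eN, eS, G]
      rw [eQ]
      field_simp
    have hlog : Real.log (G p y x2 x1 z1 / p y x2 x1 z1)
        ≤ G p y x2 x1 z1 / p y x2 x1 z1 - 1 :=
      Real.log_le_sub_one_of_pos (div_pos hG hq)
    have h2 : p y x2 x1 z1 * (LA p y x1 z1 - LB p x2 x1 z1 - LC p y x2 x1)
        ≤ G p y x2 x1 z1 - p y x2 x1 z1 := by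
      rw [key]
      have := mul_le_mul_of_nonneg_left hlog hq.le
      have hc : p y x2 x1 z1 * (G p y x2 x1 z1 / p y x2 x1 z1 - 1)
          = G p y x2 x1 z1 - p y x2 x1 z1 := by
        field_simp
      linarith
    linarith [h2, sq_nonneg (0:ℝ)]
end MVm
namespace MVm
variable {Y X2 X1 Z1 : Type*} [Fintype Y] [Fintype X2] [Fintype X1] [Fintype Z1]
variable (p : Y → X2 → X1 → Z1 → ℝ)

lemma G_sum_le (hnn : ∀ y x2 x1 z1, 0 ≤ p y x2 x1 z1)
    (hM1 : ∀ y x1 z1, mYX1Z1 p y x1 z1 * mX1 p x1 = mYX1 p y x1 * mX1Z1 p x1 z1)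
    (hsum : ∑ y, ∑ x2, ∑ x1, ∑ z1, p y x2 x1 z1 = 1) :
    ∑ y, ∑ x2, ∑ z1, ∑ x1, G p y x2 x1 z1 ≤ 1 := by
  have nnYX1 : ∀ y x1, 0 ≤ mYX1 p y x1 := fun y x1 =>
    Finset.sum_nonneg fun _ _ => Finset.sum_nonneg fun _ _ => hnn _ _ _ _
  have nnX1Z1 : ∀ x1 z1, 0 ≤ mX1Z1 p x1 z1 := fun x1 z1 =>
    Finset.sum_nonneg fun _ _ => Finset.sum_nonneg fun _ _ => hnn _ _ _ _
  have nnYZ1 : ∀ y z1, 0 ≤ mYZ1 p y z1 := fun y z1 =>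
    Finset.sum_nonneg fun _ _ => Finset.sum_nonneg fun _ _ => hnn _ _ _ _
  have nnX2Z1 : ∀ x2 z1, 0 ≤ mX2Z1 p x2 z1 := fun x2 z1 =>
    Finset.sum_nonneg fun _ _ => Finset.sum_nonneg fun _ _ => hnn _ _ _ _
  have nnYX2 : ∀ y x2, 0 ≤ mYX2 p y x2 := fun y x2 =>
    Finset.sum_nonneg fun _ _ => Finset.sum_nonneg fun _ _ => hnn _ _ _ _
  have nnX2 : ∀ x2, 0 ≤ mX2 p x2 := fun x2 =>
    Finset.sum_nonneg fun _ _ => Finset.sum_nonneg fun _ _ =>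
      Finset.sum_nonneg fun _ _ => hnn _ _ _ _
  have step1 : ∀ y z1, ∑ x1, mYX1 p y x1 * mX1Z1 p x1 z1 / mX1 p x1 = mYZ1 p y z1 := by
    intro y z1
    have hterm : ∀ x1, mYX1 p y x1 * mX1Z1 p x1 z1 / mX1 p x1 = mYX1Z1 p y x1 z1 := by
      intro x1
      have nnX1 : 0 ≤ mX1 p x1 := Finset.sum_nonneg fun _ _ =>
        Finset.sum_nonneg fun _ _ => Finset.sum_nonneg fun _ _ => hnn _ _ _ _
      rcases nnX1.eq_or_lt with h0 | hm
      · have hrle : mYX1 p y x1 ≤ mX1 p x1 :=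
          MV_le_sum1 (fun y' => ∑ x2', ∑ z1', p y' x2' x1 z1')
            (fun y' => Finset.sum_nonneg fun _ _ => Finset.sum_nonneg fun _ _ => hnn _ _ _ _) y
        have hr0 : mYX1 p y x1 = 0 := le_antisymm (hrle.trans h0.ge) (nnYX1 y x1)
        have hnle : mYX1Z1 p y x1 z1 ≤ mYX1 p y x1 :=
          Finset.sum_le_sum fun x2' _ =>
            MV_le_sum1 (fun z1' => p y x2' x1 z1') (fun _ => hnn _ _ _ _) z1
        have hn0 : mYX1Z1 p y x1 z1 = 0 :=
          le_antisymm (hnle.trans_eq hr0)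
            (Finset.sum_nonneg fun _ _ => hnn _ _ _ _)
        rw [hr0, hn0, zero_mul, zero_div]
      · rw [eq_comm, eq_div_iff hm.ne']
        exact hM1 y x1 z1
    rw [Finset.sum_congr rfl fun x1 _ => hterm x1]
    exact Finset.sum_comm
  calc ∑ y, ∑ x2, ∑ z1, ∑ x1, G p y x2 x1 z1
      = ∑ y, ∑ x2, ∑ z1, mYZ1 p y z1 *
          (mX2Z1 p x2 z1 * mYX2 p y x2 / (mYZ1 p y z1 * mX2 p x2)) := by
        refine Finset.sum_congr rfl fun y _ => Finset.sum_congr rfl fun x2 _ =>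
          Finset.sum_congr rfl fun z1 _ => ?_
        rw [show (∑ x1, G p y x2 x1 z1) = (∑ x1, mYX1 p y x1 * mX1Z1 p x1 z1 / mX1 p x1) *
            (mX2Z1 p x2 z1 * mYX2 p y x2 / (mYZ1 p y z1 * mX2 p x2)) from
          (Finset.sum_mul _ _ _).symm, step1 y z1]
    _ ≤ ∑ y, ∑ x2, ∑ z1, mX2Z1 p x2 z1 * (mYX2 p y x2 / mX2 p x2) := by
        refine Finset.sum_le_sum fun y _ => Finset.sum_le_sum fun x2 _ =>
          Finset.sum_le_sum fun z1 _ => ?_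
        rcases (nnYZ1 y z1).eq_or_lt with he0 | he
        · rw [← he0, zero_mul]
          exact mul_nonneg (nnX2Z1 x2 z1) (div_nonneg (nnYX2 y x2) (nnX2 x2))
        · rcases (nnX2 x2).eq_or_lt with hv0 | hv
          · have hule : mX2Z1 p x2 z1 ≤ mX2 p x2 :=
              Finset.sum_le_sum fun y' _ => Finset.sum_le_sum fun x1' _ =>
                MV_le_sum1 (fun z1' => p y' x2 x1' z1') (fun _ => hnn _ _ _ _) z1
            have hu0 : mX2Z1 p x2 z1 = 0 :=
              le_antisymm (hule.trans hv0.ge) (nnX2Z1 x2 z1)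
            rw [hu0, zero_mul, zero_mul, zero_div, mul_zero]
          · refine le_of_eq ?_
            field_simp
    _ = ∑ y, ∑ x2, (∑ z1, mX2Z1 p x2 z1) * (mYX2 p y x2 / mX2 p x2) := by
        refine Finset.sum_congr rfl fun y _ => Finset.sum_congr rfl fun x2 _ => ?_
        rw [Finset.sum_mul]
    _ = ∑ y, ∑ x2, mX2 p x2 * (mYX2 p y x2 / mX2 p x2) := by
        refine Finset.sum_congr rfl fun y _ => Finset.sum_congr rfl fun x2 _ => ?_
        congr 1
        exact Finset.sum_comm.trans (MV_s23 fun y' z1 x1 => p y' x2 x1 z1)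
    _ ≤ ∑ y, ∑ x2, mYX2 p y x2 := by
        refine Finset.sum_le_sum fun y _ => Finset.sum_le_sum fun x2 _ => ?_
        rcases (nnX2 x2).eq_or_lt with hv0 | hv
        · rw [← hv0, zero_mul]; exact nnYX2 y x2
        · exact le_of_eq (by field_simp)
    _ = 1 := by simp only [mYX2]; exact hsum

lemma key_ineq (hnn : ∀ y x2 x1 z1, 0 ≤ p y x2 x1 z1)
    (hsum : ∑ y, ∑ x2, ∑ x1, ∑ z1, p y x2 x1 z1 = 1)
    (hMpt : ∀ y x2 x1 z1, p y x2 x1 z1 * mX1 p x1 = mYX2X1 p y x2 x1 * mX1Z1 p x1 z1) :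
    CMI (fun x1 y z1 => ∑ x2, p y x2 x1 z1)
      ≤ CMI (fun x1 x2 z1 => ∑ y, p y x2 x1 z1)
        + CMI (fun y x1 x2 => ∑ z1, p y x2 x1 z1) := by
  have hM1 : ∀ y x1 z1, mYX1Z1 p y x1 z1 * mX1 p x1 = mYX1 p y x1 * mX1Z1 p x1 z1 := by
    intro y x1 z1
    calc mYX1Z1 p y x1 z1 * mX1 p x1 = ∑ x2, p y x2 x1 z1 * mX1 p x1 := Finset.sum_mul _ _ _
      _ = ∑ x2, mYX2X1 p y x2 x1 * mX1Z1 p x1 z1 :=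
          Finset.sum_congr rfl fun x2 _ => hMpt y x2 x1 z1
      _ = mYX1 p y x1 * mX1Z1 p x1 z1 := by
          rw [← Finset.sum_mul]
          congr 1
  have hM2 : ∀ x2 x1 z1, mX2X1Z1 p x2 x1 z1 * mX1 p x1 = mX1X2 p x2 x1 * mX1Z1 p x1 z1 := by
    intro x2 x1 z1
    calc mX2X1Z1 p x2 x1 z1 * mX1 p x1 = ∑ y, p y x2 x1 z1 * mX1 p x1 := Finset.sum_mul _ _ _
      _ = ∑ y, mYX2X1 p y x2 x1 * mX1Z1 p x1 z1 :=
          Finset.sum_congr rfl fun y _ => hMpt y x2 x1 z1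
      _ = mX1X2 p x2 x1 * mX1Z1 p x1 z1 := by
          rw [← Finset.sum_mul]
          congr 1
  have hsum' : ∑ y, ∑ x2, ∑ z1, ∑ x1, p y x2 x1 z1 = 1 :=
    (MV_s34 fun y x2 z1 x1 => p y x2 x1 z1).trans hsum
  have hmain : CMI (fun x1 y z1 => ∑ x2, p y x2 x1 z1)
      - CMI (fun x1 x2 z1 => ∑ y, p y x2 x1 z1)
      - CMI (fun y x1 x2 => ∑ z1, p y x2 x1 z1) ≤ 0 := by
    rw [A_eq p, B_eq p, C_eq p]
    have expand : ∑ y, ∑ x2, ∑ z1, ∑ x1,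
        (p y x2 x1 z1 * LA p y x1 z1 - p y x2 x1 z1 * LB p x2 x1 z1
          - p y x2 x1 z1 * LC p y x2 x1)
        = (∑ y, ∑ x2, ∑ z1, ∑ x1, p y x2 x1 z1 * LA p y x1 z1)
          - (∑ y, ∑ x2, ∑ z1, ∑ x1, p y x2 x1 z1 * LB p x2 x1 z1)
          - (∑ y, ∑ x2, ∑ z1, ∑ x1, p y x2 x1 z1 * LC p y x2 x1) := by
      simp only [Finset.sum_sub_distrib]
    rw [← expand]
    have expand2 : ∑ y, ∑ x2, ∑ z1, ∑ x1, (G p y x2 x1 z1 - p y x2 x1 z1)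
        = (∑ y, ∑ x2, ∑ z1, ∑ x1, G p y x2 x1 z1)
          - (∑ y, ∑ x2, ∑ z1, ∑ x1, p y x2 x1 z1) := by
      simp only [Finset.sum_sub_distrib]
    have h1 : ∑ y, ∑ x2, ∑ z1, ∑ x1,
        (p y x2 x1 z1 * LA p y x1 z1 - p y x2 x1 z1 * LB p x2 x1 z1
          - p y x2 x1 z1 * LC p y x2 x1)
        ≤ ∑ y, ∑ x2, ∑ z1, ∑ x1, (G p y x2 x1 z1 - p y x2 x1 z1) := by
      refine Finset.sum_le_sum fun y _ => Finset.sum_le_sum fun x2 _ =>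
        Finset.sum_le_sum fun z1 _ => Finset.sum_le_sum fun x1 _ => ?_
      exact term_ineq p hnn hMpt hM1 hM2 y x2 x1 z1
    have h2 := G_sum_le p hnn hM1 hsum
    rw [expand2, hsum'] at h1
    linarith
  linarith
end MVm

/-- If I(Y;X1|X2) ≤ ε_info and (Y,X2)–X1–Z1 is a Markov chain, then
I(X1;Y|Z1) ≤ I(X1;X2|Z1) + ε_info. -/
theorem multiview_label_information_bound
    {Y X2 X1 Z1 : Type*} [Fintype Y] [Fintype X2] [Fintype X1] [Fintype Z1]
    (p : Y → X2 → X1 → Z1 → ℝ) (hp : IsPMF4 p)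
    (hchain : Markov fun (w : Y × X2) x1 z1 => p w.1 w.2 x1 z1)
    (ε : ℝ) (hε : 0 ≤ ε)
    (hmv : CMI (fun y x1 x2 => ∑ z1, p y x2 x1 z1) ≤ ε) :
    CMI (fun x1 y z1 => ∑ x2, p y x2 x1 z1)
      ≤ CMI (fun x1 x2 z1 => ∑ y, p y x2 x1 z1) + ε := by
  have hMpt : ∀ y x2 x1 z1, p y x2 x1 z1 * MVm.mX1 p x1
      = MVm.mYX2X1 p y x2 x1 * MVm.mX1Z1 p x1 z1 := by
    intro y x2 x1 z1
    have h := hchain (y, x2) x1 z1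
    simpa [MVm.mX1, MVm.mYX2X1, MVm.mX1Z1, Fintype.sum_prod_type] using h
  have hkey := MVm.key_ineq p hp.1 hp.2 hMpt
  linarith
end

section
/- If X1 and X2 share only label information in the sense that X1 and X2 are conditionally independent given Y (I(X1; X2 | Y) = 0), then for any representation Z1 of X1 (Markov chain (Y,X2)–X1–Z1) one has I(Z1; X2) ≤ I(Z1; Y). -/
open scoped BigOperators

private lemma gibbs_term_le {f g : ℝ} (hf : 0 ≤ f) (hg : 0 ≤ g) (h0 : g = 0 → f = 0) :
    f - g ≤ f * Real.log (f / g) := by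
  rcases hf.eq_or_lt with h | h
  · simp only [← h, zero_mul, zero_sub]; linarith
  · have hg' : 0 < g := hg.lt_of_ne fun e => by
      have hf0 := h0 e.symm; rw [hf0] at h; exact absurd h (lt_irrefl 0)
    have h3 := Real.log_le_sub_one_of_pos (div_pos hg' h)
    have h2 : Real.log (g / f) = Real.log g - Real.log f := Real.log_div hg'.ne' h.ne'
    have h1 : Real.log (f / g) = Real.log f - Real.log g := Real.log_div h.ne' hg'.ne'
    have h4 : g / f * f = g := div_mul_cancel₀ _ h.ne'
    rw [h2] at h3
    nlinarith [mul_le_mul_of_nonneg_left h3 h.le]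

private lemma gibbs_term_eq {f g : ℝ} (hf : 0 ≤ f) (hg : 0 ≤ g) (h0 : g = 0 → f = 0)
    (h : f * Real.log (f / g) ≤ f - g) : f = g := by
  rcases hf.eq_or_lt with hf0 | hf0
  · rw [← hf0] at h ⊢
    simp only [zero_mul, zero_sub] at h
    linarith [le_antisymm (by linarith : g ≤ 0) hg]
  · have hg' : 0 < g := hg.lt_of_ne fun e => by
      have hf0' := h0 e.symm; rw [hf0'] at hf0; exact absurd hf0 (lt_irrefl 0)
    by_contra hne
    have hratio : g / f ≠ 1 := by
      intro e; exact hne ((div_eq_one_iff_eq hf0.ne').1 e).symm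
    have h3 := Real.log_lt_sub_one_of_pos (div_pos hg' hf0) hratio
    have h2 : Real.log (g / f) = Real.log g - Real.log f := Real.log_div hg'.ne' hf0.ne'
    have h1 : Real.log (f / g) = Real.log f - Real.log g := Real.log_div hf0.ne' hg'.ne'
    have h4 : g / f * f = g := div_mul_cancel₀ _ hf0.ne'
    rw [h2] at h3
    rw [h1] at h
    nlinarith [mul_lt_mul_of_pos_left h3 hf0]

private lemma gibbs_sum_nonneg {ι : Type*} [Fintype ι] (f g : ι → ℝ)
    (hf : ∀ i, 0 ≤ f i) (hg : ∀ i, 0 ≤ g i) (h0 : ∀ i, g i = 0 → f i = 0)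
    (hsum : ∑ i, f i = ∑ i, g i) :
    0 ≤ ∑ i, f i * Real.log (f i / g i) := by
  have h := Finset.sum_le_sum (fun i (_ : i ∈ Finset.univ) => gibbs_term_le (hf i) (hg i) (h0 i))
  rw [Finset.sum_sub_distrib, hsum, sub_self] at h
  exact h

private lemma gibbs_sum_eq {ι : Type*} [Fintype ι] (f g : ι → ℝ)
    (hf : ∀ i, 0 ≤ f i) (hg : ∀ i, 0 ≤ g i) (h0 : ∀ i, g i = 0 → f i = 0)
    (hsum : ∑ i, f i = ∑ i, g i)
    (heq : ∑ i, f i * Real.log (f i / g i) = 0) : ∀ i, f i = g i := by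
  have hnn : ∀ i ∈ Finset.univ, (0:ℝ) ≤ f i * Real.log (f i / g i) - (f i - g i) := by
    intro i _; have := gibbs_term_le (hf i) (hg i) (h0 i); linarith
  have hzero : ∑ i, (f i * Real.log (f i / g i) - (f i - g i)) = 0 := by
    rw [Finset.sum_sub_distrib, heq, Finset.sum_sub_distrib, hsum]; ring
  have key := (Finset.sum_eq_zero_iff_of_nonneg hnn).1 hzero
  intro i
  have hi := key i (Finset.mem_univ i)
  exact gibbs_term_eq (hf i) (hg i) (h0 i) (by linarith)


private lemma gibbs3_nonneg {A B C : Type*} [Fintype A] [Fintype B] [Fintype C]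
    (f g : A → B → C → ℝ)
    (hf : ∀ a b c, 0 ≤ f a b c) (hg : ∀ a b c, 0 ≤ g a b c)
    (h0 : ∀ a b c, g a b c = 0 → f a b c = 0)
    (hsum : ∑ a, ∑ b, ∑ c, f a b c = ∑ a, ∑ b, ∑ c, g a b c) :
    0 ≤ ∑ a, ∑ b, ∑ c, f a b c * Real.log (f a b c / g a b c) := by
  have h := gibbs_sum_nonneg (fun w : A × B × C => f w.1 w.2.1 w.2.2)
      (fun w : A × B × C => g w.1 w.2.1 w.2.2) (fun w => hf _ _ _) (fun w => hg _ _ _)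
      (fun w => h0 _ _ _) (by simpa only [Fintype.sum_prod_type] using hsum)
  simpa only [Fintype.sum_prod_type] using h

private lemma gibbs3_eq {A B C : Type*} [Fintype A] [Fintype B] [Fintype C]
    (f g : A → B → C → ℝ)
    (hf : ∀ a b c, 0 ≤ f a b c) (hg : ∀ a b c, 0 ≤ g a b c)
    (h0 : ∀ a b c, g a b c = 0 → f a b c = 0)
    (hsum : ∑ a, ∑ b, ∑ c, f a b c = ∑ a, ∑ b, ∑ c, g a b c)
    (heq : ∑ a, ∑ b, ∑ c, f a b c * Real.log (f a b c / g a b c) = 0) :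
    ∀ a b c, f a b c = g a b c := by
  have h := gibbs_sum_eq (fun w : A × B × C => f w.1 w.2.1 w.2.2)
      (fun w : A × B × C => g w.1 w.2.1 w.2.2) (fun w => hf _ _ _) (fun w => hg _ _ _)
      (fun w => h0 _ _ _) (by simpa only [Fintype.sum_prod_type] using hsum)
      (by simpa only [Fintype.sum_prod_type] using heq)
  exact fun a b c => h (a, b, c)

private lemma le_sum_of_nonneg {A : Type*} [Fintype A] {f : A → ℝ} (h : ∀ a, 0 ≤ f a) (a : A) :
    f a ≤ ∑ a', f a' := Finset.single_le_sum (fun i _ => h i) (Finset.mem_univ a)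

private lemma comm23 {A B C D : Type*} [Fintype A] [Fintype B] [Fintype C] [AddCommMonoid D]
    (f : A → B → C → D) :
    ∑ a, ∑ b, ∑ c, f a b c = ∑ a, ∑ c, ∑ b, f a b c :=
  Finset.sum_congr rfl fun _ _ => Finset.sum_comm

private lemma comm13 {A B C D : Type*} [Fintype A] [Fintype B] [Fintype C] [AddCommMonoid D]
    (f : A → B → C → D) :
    ∑ a, ∑ b, ∑ c, f a b c = ∑ c, ∑ b, ∑ a, f a b c :=
  calc ∑ a, ∑ b, ∑ c, f a b c = ∑ a, ∑ c, ∑ b, f a b c := comm23 f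
    _ = ∑ c, ∑ a, ∑ b, f a b c := Finset.sum_comm
    _ = ∑ c, ∑ b, ∑ a, f a b c := Finset.sum_congr rfl fun _ _ => Finset.sum_comm

section Joint
variable {Y X2 X1 Z1 : Type*} [Fintype Y] [Fintype X2] [Fintype X1] [Fintype Z1]
  (p : Y → X2 → X1 → Z1 → ℝ)

private def sF (y : Y) (x2 : X2) (x1 : X1) : ℝ := ∑ z, p y x2 x1 z
private def sYF (y : Y) : ℝ := ∑ x2, ∑ x1, sF p y x2 x1
private def sX1YF (y : Y) (x1 : X1) : ℝ := ∑ x2, sF p y x2 x1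
private def sX2YF (y : Y) (x2 : X2) : ℝ := ∑ x1, sF p y x2 x1

private lemma ci_pointwise (hnn : ∀ y x2 x1 z, 0 ≤ p y x2 x1 z)
    (htot : ∑ y, ∑ x2, ∑ x1, ∑ z, p y x2 x1 z = 1)
    (hci : CMI (fun x1 x2 y => ∑ z1, p y x2 x1 z1) = 0) :
    ∀ y x2 x1, sF p y x2 x1 * sYF p y = sX1YF p y x1 * sX2YF p y x2 := by
  have hs : ∀ y x2 x1, 0 ≤ sF p y x2 x1 := fun y x2 x1 =>
    Finset.sum_nonneg fun z _ => hnn y x2 x1 z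
  have hsX1Y : ∀ y x1, 0 ≤ sX1YF p y x1 := fun y x1 =>
    Finset.sum_nonneg fun x2 _ => hs y x2 x1
  have hsX2Y : ∀ y x2, 0 ≤ sX2YF p y x2 := fun y x2 =>
    Finset.sum_nonneg fun x1 _ => hs y x2 x1
  have hsY : ∀ y, 0 ≤ sYF p y := fun y =>
    Finset.sum_nonneg fun x2 _ => hsX2Y y x2
  have hle1 : ∀ y x2 x1, sF p y x2 x1 ≤ sX1YF p y x1 := fun y x2 x1 =>
    le_sum_of_nonneg (fun x2' => hs y x2' x1) x2
  have hle2 : ∀ y x2 x1, sF p y x2 x1 ≤ sX2YF p y x2 := fun y x2 x1 =>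
    le_sum_of_nonneg (fun x1' => hs y x2 x1') x1
  have hleY : ∀ y x2 x1, sF p y x2 x1 ≤ sYF p y := fun y x2 x1 =>
    (hle2 y x2 x1).trans (le_sum_of_nonneg (fun x2' => hsX2Y y x2') x2)
  have hleX1Y : ∀ y x1, sX1YF p y x1 ≤ sYF p y := fun y x1 =>
    Finset.sum_le_sum fun x2 _ => le_sum_of_nonneg (fun x1' => hs y x2 x1') x1
  have hmX1 : ∀ y, ∑ x1, sX1YF p y x1 = sYF p y := fun y => Finset.sum_comm
  have hmX2 : ∀ y, ∑ x2, sX2YF p y x2 = sYF p y := fun y => rfl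
  -- per-y sum of g
  have hgy : ∀ y, ∑ x2, ∑ x1, sX1YF p y x1 * sX2YF p y x2 / sYF p y = sYF p y := by
    intro y
    by_cases h : sYF p y = 0
    · simp [h]
    · have step : ∀ x2, ∑ x1, sX1YF p y x1 * sX2YF p y x2 / sYF p y
          = sX2YF p y x2 := by
        intro x2
        rw [← Finset.sum_div, ← Finset.sum_mul, hmX1,
          mul_comm, mul_div_assoc, div_self h, mul_one]
      rw [Finset.sum_congr rfl fun x2 _ => step x2]
      exact hmX2 y
  -- total sums
  have hsumf : ∑ x1, ∑ x2, ∑ y, sF p y x2 x1 = 1 := by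
    rw [comm13 (fun x1 x2 y => sF p y x2 x1)]
    exact htot
  have hsumg : ∑ x1, ∑ x2, ∑ y, sX1YF p y x1 * sX2YF p y x2 / sYF p y = 1 := by
    rw [comm13 (fun x1 x2 y => sX1YF p y x1 * sX2YF p y x2 / sYF p y)]
    rw [Finset.sum_congr rfl fun y (_ : y ∈ Finset.univ) => hgy y]
    rw [← htot]
    rfl
  have key := gibbs3_eq (fun x1 x2 y => sF p y x2 x1)
      (fun x1 x2 y => sX1YF p y x1 * sX2YF p y x2 / sYF p y)
      (fun x1 x2 y => hs y x2 x1)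
      (fun x1 x2 y => div_nonneg (mul_nonneg (hsX1Y y x1) (hsX2Y y x2)) (hsY y))
      (fun x1 x2 y hg0 => by
        by_cases hy : sYF p y = 0
        · exact le_antisymm (by rw [← hy]; exact hleY y x2 x1) (hs y x2 x1)
        · have : sX1YF p y x1 * sX2YF p y x2 = 0 := by
            by_contra hne
            exact hne (by
              have := div_eq_zero_iff.1 hg0
              rcases this with h1 | h2
              · exact h1
              · exact absurd h2 hy)
          rcases mul_eq_zero.1 this with h1 | h2
          · exact le_antisymm (by rw [← h1]; exact hle1 y x2 x1) (hs y x2 x1)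
          · exact le_antisymm (by rw [← h2]; exact hle2 y x2 x1) (hs y x2 x1))
      (hsumf.trans hsumg.symm)
      (?_)
  · intro y x2 x1
    have hpt := key x1 x2 y
    by_cases hy : sYF p y = 0
    · have hf0 : sF p y x2 x1 = 0 :=
        le_antisymm (by rw [← hy]; exact hleY y x2 x1) (hs y x2 x1)
      have hx1y0 : sX1YF p y x1 = 0 :=
        le_antisymm (by rw [← hy]; exact hleX1Y y x1) (hsX1Y y x1)
      rw [hf0, hx1y0, zero_mul, zero_mul]
    · rw [hpt, div_mul_cancel₀ _ hy]
  · -- the Gibbs sum equals the CMI, which is 0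
    rw [← hci]
    unfold CMI
    apply Finset.sum_congr rfl; intro x1 _
    apply Finset.sum_congr rfl; intro x2 _
    apply Finset.sum_congr rfl; intro y _
    have e1 : (∑ x1', ∑ x2', ∑ z1, p y x2' x1' z1) = sYF p y := Finset.sum_comm
    have harg : sF p y x2 x1 / (sX1YF p y x1 * sX2YF p y x2 / sYF p y)
        = sYF p y * sF p y x2 x1 / (sX1YF p y x1 * sX2YF p y x2) := by
      rw [div_div_eq_mul_div, mul_comm]
    dsimp only
    rw [e1, harg]
    rfl
private def sX1F (x1 : X1) : ℝ := ∑ y, ∑ x2, sF p y x2 x1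
private def tF (x1 : X1) (z : Z1) : ℝ := ∑ y, ∑ x2, p y x2 x1 z
private def qF (y : Y) (x2 : X2) (z : Z1) : ℝ := ∑ x1, p y x2 x1 z
private def qZYF (z : Z1) (y : Y) : ℝ := ∑ x2, qF p y x2 z
private def pZXF (z : Z1) (x2 : X2) : ℝ := ∑ y, qF p y x2 z
private def pZF (z : Z1) : ℝ := ∑ x2, pZXF p z x2
private def pX2F (x2 : X2) : ℝ := ∑ z, pZXF p z x2

private lemma chain_pointwise
    (hchain : ∀ (w : Y × X2) (x1 : X1) (z : Z1),
      p w.1 w.2 x1 z * (∑ w' : Y × X2, ∑ z', p w'.1 w'.2 x1 z')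
        = (∑ z', p w.1 w.2 x1 z') * (∑ w' : Y × X2, p w'.1 w'.2 x1 z)) :
    ∀ y x2 x1 z, p y x2 x1 z * sX1F p x1 = sF p y x2 x1 * tF p x1 z := by
  intro y x2 x1 z
  have h := hchain (y, x2) x1 z
  simp only [Fintype.sum_prod_type] at h
  exact h

private lemma star_pointwise (hnn : ∀ y x2 x1 z, 0 ≤ p y x2 x1 z)
    (hciP : ∀ y x2 x1, sF p y x2 x1 * sYF p y = sX1YF p y x1 * sX2YF p y x2)
    (hch : ∀ y x2 x1 z, p y x2 x1 z * sX1F p x1 = sF p y x2 x1 * tF p x1 z) :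
    ∀ y x2 z, qF p y x2 z * sYF p y = sX2YF p y x2 * qZYF p z y := by
  have hs : ∀ y x2 x1, 0 ≤ sF p y x2 x1 := fun y x2 x1 =>
    Finset.sum_nonneg fun z _ => hnn y x2 x1 z
  have hsX2Y : ∀ y x2, 0 ≤ sX2YF p y x2 := fun y x2 =>
    Finset.sum_nonneg fun x1 _ => hs y x2 x1
  have hq : ∀ y x2 z, 0 ≤ qF p y x2 z := fun y x2 z =>
    Finset.sum_nonneg fun x1 _ => hnn y x2 x1 z
  have hqle : ∀ y x2 z, qF p y x2 z ≤ sX2YF p y x2 := fun y x2 z =>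
    Finset.sum_le_sum fun x1 _ => le_sum_of_nonneg (fun z' => hnn y x2 x1 z') z
  have hX2Yle : ∀ y x2, sX2YF p y x2 ≤ sYF p y := fun y x2 =>
    le_sum_of_nonneg (fun x2' => hsX2Y y x2') x2
  have hmX2 : ∀ y, ∑ x2, sX2YF p y x2 = sYF p y := fun y => rfl
  intro y x2 z
  by_cases hy : sYF p y = 0
  · have hq0 : ∀ x2', qF p y x2' z = 0 := fun x2' =>
      le_antisymm (by rw [← hy]; exact (hqle y x2' z).trans (hX2Yle y x2')) (hq y x2' z)
    have hqzy : qZYF p z y = 0 := by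
      unfold qZYF
      exact Finset.sum_eq_zero fun x2' _ => hq0 x2'
    rw [hq0 x2, hqzy, zero_mul, mul_zero]
  · set u : X1 → ℝ := fun x1 => sX1YF p y x1 * tF p x1 z / sX1F p x1 with hu_def
    have hclaim : ∀ x2' x1, p y x2' x1 z * sYF p y = sX2YF p y x2' * u x1 := by
      intro x2' x1
      by_cases hx : sX1F p x1 = 0
      · have hp0 : p y x2' x1 z = 0 := by
          have h1 : p y x2' x1 z ≤ sF p y x2' x1 :=
            le_sum_of_nonneg (fun z' => hnn y x2' x1 z') z
          have h2 : sF p y x2' x1 ≤ sX1F p x1 :=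
            (le_sum_of_nonneg (fun x2'' => hs y x2'' x1) x2').trans
              (le_sum_of_nonneg (fun y' => Finset.sum_nonneg fun x2'' _ => hs y' x2'' x1) y)
          exact le_antisymm (by rw [← hx]; exact h1.trans h2) (hnn y x2' x1 z)
        have hX1Y0 : sX1YF p y x1 = 0 := by
          have h2 : sX1YF p y x1 ≤ sX1F p x1 :=
            le_sum_of_nonneg (fun y' => Finset.sum_nonneg fun x2'' _ => hs y' x2'' x1) y
          exact le_antisymm (by rw [← hx]; exact h2)
            (Finset.sum_nonneg fun x2'' _ => hs y x2'' x1)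
        simp [hu_def, hp0, hX1Y0]
      · have hu : u x1 * sX1F p x1 = sX1YF p y x1 * tF p x1 z := by
          rw [hu_def]; exact div_mul_cancel₀ _ hx
        apply mul_right_cancel₀ hx
        calc p y x2' x1 z * sYF p y * sX1F p x1
            = (p y x2' x1 z * sX1F p x1) * sYF p y := by ring
          _ = sF p y x2' x1 * tF p x1 z * sYF p y := by rw [hch y x2' x1 z]
          _ = (sF p y x2' x1 * sYF p y) * tF p x1 z := by ring
          _ = sX1YF p y x1 * sX2YF p y x2' * tF p x1 z := by rw [hciP y x2' x1]
          _ = sX2YF p y x2' * (sX1YF p y x1 * tF p x1 z) := by ring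
          _ = sX2YF p y x2' * (u x1 * sX1F p x1) := by rw [hu]
          _ = sX2YF p y x2' * u x1 * sX1F p x1 := by ring
    have hqsum : ∀ x2', qF p y x2' z * sYF p y = sX2YF p y x2' * ∑ x1, u x1 := by
      intro x2'
      unfold qF
      rw [Finset.sum_mul, Finset.mul_sum]
      exact Finset.sum_congr rfl fun x1 _ => hclaim x2' x1
    have hU : qZYF p z y * sYF p y = sYF p y * ∑ x1, u x1 := by
      unfold qZYF
      rw [Finset.sum_mul]
      rw [Finset.sum_congr rfl fun x2' (_ : x2' ∈ Finset.univ) => hqsum x2']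
      rw [← Finset.sum_mul, hmX2]
    have hUq : (∑ x1, u x1) = qZYF p z y := by
      have := hU
      rw [mul_comm (sYF p y) _] at this
      exact (mul_right_cancel₀ hy this.symm)
    rw [hqsum x2, hUq]

end Joint


/-- If X1 and X2 are conditionally independent given Y
(I(X1;X2|Y) = 0) and (Y,X2)–X1–Z1 is a Markov chain, then I(Z1;X2) ≤ I(Z1;Y). -/
theorem shared_information_bounded_by_label_information
    {Y X2 X1 Z1 : Type*} [Fintype Y] [Fintype X2] [Fintype X1] [Fintype Z1]
    (p : Y → X2 → X1 → Z1 → ℝ) (hp : IsPMF4 p)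
    (hci : CMI (fun x1 x2 y => ∑ z1, p y x2 x1 z1) = 0)
    (hchain : Markov fun (w : Y × X2) x1 z1 => p w.1 w.2 x1 z1) :
    MI (fun z1 x2 => ∑ y, ∑ x1, p y x2 x1 z1)
      ≤ MI (fun z1 y => ∑ x2, ∑ x1, p y x2 x1 z1) := by
  obtain ⟨hnn, htot⟩ := hp
  -- pointwise conditional independence and Markov property
  have hciP := ci_pointwise p hnn htot hci
  have hchP := chain_pointwise p (fun w x1 z => hchain w x1 z)
  have hstar := star_pointwise p hnn hciP hchP
  -- basic positivity
  have hq : ∀ y x2 z, 0 ≤ qF p y x2 z := fun y x2 z =>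
    Finset.sum_nonneg fun x1 _ => hnn y x2 x1 z
  have hs : ∀ y x2 x1, 0 ≤ sF p y x2 x1 := fun y x2 x1 =>
    Finset.sum_nonneg fun z _ => hnn y x2 x1 z
  have hsX2Y : ∀ y x2, 0 ≤ sX2YF p y x2 := fun y x2 =>
    Finset.sum_nonneg fun x1 _ => hs y x2 x1
  have hqZY : ∀ z y, 0 ≤ qZYF p z y := fun z y =>
    Finset.sum_nonneg fun x2 _ => hq y x2 z
  have hpZX : ∀ z x2, 0 ≤ pZXF p z x2 := fun z x2 =>
    Finset.sum_nonneg fun y _ => hq y x2 z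
  have hpZ : ∀ z, 0 ≤ pZF p z := fun z =>
    Finset.sum_nonneg fun x2 _ => hpZX z x2
  have hpX2 : ∀ x2, 0 ≤ pX2F p x2 := fun x2 =>
    Finset.sum_nonneg fun z _ => hpZX z x2
  -- bounds by marginals
  have hqle1 : ∀ y x2 z, qF p y x2 z ≤ sX2YF p y x2 := fun y x2 z =>
    Finset.sum_le_sum fun x1 _ => le_sum_of_nonneg (fun z' => hnn y x2 x1 z') z
  have hqle2 : ∀ y x2 z, qF p y x2 z ≤ qZYF p z y := fun y x2 z =>
    le_sum_of_nonneg (fun x2' => hq y x2' z) x2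
  have hqle3 : ∀ y x2 z, qF p y x2 z ≤ pZXF p z x2 := fun y x2 z =>
    le_sum_of_nonneg (fun y' => hq y' x2 z) y
  have hqle4 : ∀ y x2 z, qF p y x2 z ≤ pZF p z := fun y x2 z =>
    (hqle3 y x2 z).trans (le_sum_of_nonneg (fun x2' => hpZX z x2') x2)
  have hqle5 : ∀ y x2 z, qF p y x2 z ≤ pX2F p x2 := fun y x2 z =>
    (hqle3 y x2 z).trans (le_sum_of_nonneg (fun z' => hpZX z' x2) z)
  have hqle6 : ∀ y x2 z, qF p y x2 z ≤ sYF p y := fun y x2 z =>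
    (hqle1 y x2 z).trans (le_sum_of_nonneg (fun x2' => hsX2Y y x2') x2)
  -- expansion of the right-hand side MI
  have expand1 : MI (fun z1 y' => ∑ x2, ∑ x1, p y' x2 x1 z1)
      = ∑ y, ∑ x2, ∑ z, qF p y x2 z
          * Real.log (qZYF p z y / (pZF p z * sYF p y)) := by
    unfold MI m1 m2
    dsimp only
    have step : ∀ z y, (∑ x2, ∑ x1, p y x2 x1 z)
        * Real.log ((∑ x2, ∑ x1, p y x2 x1 z) /
            ((∑ y', ∑ x2, ∑ x1, p y' x2 x1 z) * (∑ z', ∑ x2, ∑ x1, p y x2 x1 z')))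
        = ∑ x2, qF p y x2 z * Real.log (qZYF p z y / (pZF p z * sYF p y)) := by
      intro z y
      have h1 : (∑ y', ∑ x2, ∑ x1, p y' x2 x1 z) = pZF p z := Finset.sum_comm
      have h2 : (∑ z', ∑ x2, ∑ x1, p y x2 x1 z') = sYF p y :=
        (Finset.sum_comm).trans (Finset.sum_congr rfl fun x2 _ => Finset.sum_comm)
      rw [h1, h2]
      exact Finset.sum_mul _ _ _
    rw [Finset.sum_congr rfl fun z (_ : z ∈ Finset.univ) =>
      Finset.sum_congr rfl fun y (_ : y ∈ Finset.univ) => step z y]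
    calc ∑ z, ∑ y, ∑ x2, qF p y x2 z * Real.log (qZYF p z y / (pZF p z * sYF p y))
        = ∑ y, ∑ z, ∑ x2, qF p y x2 z * Real.log (qZYF p z y / (pZF p z * sYF p y)) :=
          Finset.sum_comm
      _ = ∑ y, ∑ x2, ∑ z, qF p y x2 z * Real.log (qZYF p z y / (pZF p z * sYF p y)) :=
          Finset.sum_congr rfl fun y _ => Finset.sum_comm
  -- expansion of the left-hand side MI
  have expand2 : MI (fun z1 x2 => ∑ y, ∑ x1, p y x2 x1 z1)
      = ∑ y, ∑ x2, ∑ z, qF p y x2 z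
          * Real.log (pZXF p z x2 / (pZF p z * pX2F p x2)) := by
    unfold MI m1 m2
    dsimp only
    have step : ∀ z x2, (∑ y, ∑ x1, p y x2 x1 z)
        * Real.log ((∑ y, ∑ x1, p y x2 x1 z) /
            ((∑ x2', ∑ y, ∑ x1, p y x2' x1 z) * (∑ z', ∑ y, ∑ x1, p y x2 x1 z')))
        = ∑ y, qF p y x2 z * Real.log (pZXF p z x2 / (pZF p z * pX2F p x2)) := by
      intro z x2
      exact Finset.sum_mul _ _ _
    rw [Finset.sum_congr rfl fun z (_ : z ∈ Finset.univ) =>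
      Finset.sum_congr rfl fun x2 (_ : x2 ∈ Finset.univ) => step z x2]
    exact comm13 _
  -- the per-term identity
  have term_eq : ∀ y x2 z,
      qF p y x2 z * Real.log (qF p y x2 z /
          (sX2YF p y x2 * pZXF p z x2 / pX2F p x2))
        = qF p y x2 z * Real.log (qZYF p z y / (pZF p z * sYF p y))
          - qF p y x2 z * Real.log (pZXF p z x2 / (pZF p z * pX2F p x2)) := by
    intro y x2 z
    rcases (hq y x2 z).eq_or_lt with hq0 | hq0
    · rw [← hq0]; ring
    · have h1 : 0 < sX2YF p y x2 := lt_of_lt_of_le hq0 (hqle1 y x2 z)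
      have h2 : 0 < qZYF p z y := lt_of_lt_of_le hq0 (hqle2 y x2 z)
      have h3 : 0 < pZXF p z x2 := lt_of_lt_of_le hq0 (hqle3 y x2 z)
      have h4 : 0 < pZF p z := lt_of_lt_of_le hq0 (hqle4 y x2 z)
      have h5 : 0 < pX2F p x2 := lt_of_lt_of_le hq0 (hqle5 y x2 z)
      have h6 : 0 < sYF p y := lt_of_lt_of_le hq0 (hqle6 y x2 z)
      have hA : qZYF p z y / (pZF p z * sYF p y) ≠ 0 :=
        (div_pos h2 (mul_pos h4 h6)).ne'
      have hB : pZXF p z x2 / (pZF p z * pX2F p x2) ≠ 0 :=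
        (div_pos h3 (mul_pos h4 h5)).ne'
      rw [← mul_sub, ← Real.log_div hA hB]
      congr 1
      have hqzy : qZYF p z y = qF p y x2 z * sYF p y / sX2YF p y x2 := by
        rw [eq_div_iff h1.ne']
        rw [mul_comm (qZYF p z y) (sX2YF p y x2)]
        exact (hstar y x2 z).symm
      rw [hqzy]
      congr 1
      field_simp [h1.ne', h3.ne', h4.ne', h5.ne', h6.ne']
  -- total mass computations
  have hsum_q : ∑ y, ∑ x2, ∑ z, qF p y x2 z = 1 := by
    rw [← htot]
    exact Finset.sum_congr rfl fun y _ => Finset.sum_congr rfl fun x2 _ =>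
      Finset.sum_comm
  have hmargY : ∀ x2, ∑ y, sX2YF p y x2 = pX2F p x2 := by
    intro x2
    have : ∑ y, sX2YF p y x2 = ∑ y, ∑ z, qF p y x2 z :=
      Finset.sum_congr rfl fun y _ => Finset.sum_comm
    rw [this]
    exact Finset.sum_comm
  have hmargZ : ∀ x2, ∑ z, pZXF p z x2 = pX2F p x2 := fun x2 => rfl
  have hsum_g : ∑ y, ∑ x2, ∑ z,
      sX2YF p y x2 * pZXF p z x2 / pX2F p x2 = 1 := by
    have swap : ∑ y, ∑ x2, ∑ z, sX2YF p y x2 * pZXF p z x2 / pX2F p x2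
        = ∑ x2, ∑ y, ∑ z, sX2YF p y x2 * pZXF p z x2 / pX2F p x2 :=
      Finset.sum_comm
    rw [swap]
    have perx2 : ∀ x2, ∑ y, ∑ z, sX2YF p y x2 * pZXF p z x2 / pX2F p x2
        = pX2F p x2 := by
      intro x2
      by_cases hx : pX2F p x2 = 0
      · simp [hx]
      · have inner : ∀ y, ∑ z, sX2YF p y x2 * pZXF p z x2 / pX2F p x2
            = sX2YF p y x2 * pX2F p x2 / pX2F p x2 := by
          intro y
          rw [← Finset.sum_div, ← Finset.mul_sum, hmargZ]
        rw [Finset.sum_congr rfl fun y (_ : y ∈ Finset.univ) => inner y]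
        rw [← Finset.sum_div, ← Finset.sum_mul, hmargY]
        rw [mul_div_assoc, div_self hx, mul_one]
    rw [Finset.sum_congr rfl fun x2 (_ : x2 ∈ Finset.univ) => perx2 x2]
    have : ∑ x2, pX2F p x2 = ∑ y, ∑ x2, ∑ z, qF p y x2 z := by
      have e1 : ∑ x2, pX2F p x2 = ∑ x2, ∑ z, ∑ y, qF p y x2 z := rfl
      rw [e1, comm13 (fun x2 z y => qF p y x2 z)]
      exact Finset.sum_congr rfl fun y _ => Finset.sum_comm
    rw [this, hsum_q]
  -- Gibbs inequality
  have hgibbs := gibbs3_nonneg (fun y x2 z => qF p y x2 z)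
      (fun y x2 z => sX2YF p y x2 * pZXF p z x2 / pX2F p x2)
      (fun y x2 z => hq y x2 z)
      (fun y x2 z => div_nonneg (mul_nonneg (hsX2Y y x2) (hpZX z x2)) (hpX2 x2))
      (fun y x2 z hg0 => by
        by_cases hx : pX2F p x2 = 0
        · exact le_antisymm (by rw [← hx]; exact hqle5 y x2 z) (hq y x2 z)
        · have : sX2YF p y x2 * pZXF p z x2 = 0 := by
            rcases div_eq_zero_iff.1 hg0 with h' | h'
            · exact h'
            · exact absurd h' hx
          rcases mul_eq_zero.1 this with h' | h'
          · exact le_antisymm (by rw [← h']; exact hqle1 y x2 z) (hq y x2 z)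
          · exact le_antisymm (by rw [← h']; exact hqle3 y x2 z) (hq y x2 z))
      (hsum_q.trans hsum_g.symm)
  rw [Finset.sum_congr rfl (fun y (_ : y ∈ Finset.univ) =>
    Finset.sum_congr rfl fun x2 (_ : x2 ∈ Finset.univ) =>
      Finset.sum_congr rfl fun z (_ : z ∈ Finset.univ) => term_eq y x2 z)] at hgibbs
  simp only [Finset.sum_sub_distrib] at hgibbs
  rw [expand1, expand2]
  linarith
end
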